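/- arXiv:math/0503115 — 6 statements merged into one kernel-verified Lean document; each statement's English description precedes it below -/
import Mathlib

section
/- For every integer n ≥ 2, the normalized sinc integral σ_n = (2/π) ∫₀^∞ (sin t / t)^n dt satisfies 0 < σ_{n+1} < σ_n ≤ 1. -/
/-!
Split `(0, ∞)` into the half-periods `(kπ, (k+1)π)` and pair each even-indexed one with the
next: since `sin (t + π) = -sin t`, a function has positive integral over `(0, ∞)` as soon as
`f t + f (t + π) > 0` on the even-indexed half-periods. For `f = (sin t / t) ^ m` this is clear.
For `f = (sin t / t) ^ n - (sin t / t) ^ (n + 1)` it is clear when `n` is even; for odd `n` it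
amounts to `(t + π + sin t) t ^ (n + 1) < (t - sin t) (t + π) ^ (n + 1)`, which reduces to the
exponent `4` and follows from `sin t ≤ t - t ^ 3 / (2π²)` on `(0, π)` and from `sin t ≤ 1`
beyond `2π`. Monotonicity then bounds every `σ_n` by `σ_2 = 1`, which is computed by writing
`1 / t ^ 2 = ∫ s e^{-ts} ds` and exchanging the order of integration.
-/

open MeasureTheory

noncomputable def sigma (n : ℕ) : ℝ :=
  (2 / Real.pi) * ∫ t in Set.Ioi (0:ℝ), (Real.sin t / t) ^ n

open Set Real Filter Topology

theorem intervalIntegrable_of_integrableOn_Ioi {f : ℝ → ℝ} {a b c : ℝ}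
    (hf : IntegrableOn f (Ioi a)) (hab : a ≤ b) (hbc : b ≤ c) :
    IntervalIntegrable f volume b c :=
  (intervalIntegrable_iff_integrableOn_Ioc_of_le hbc).2
    (hf.mono_set (Ioc_subset_Ioi_self.trans (Ioi_subset_Ioi hab)))

theorem integral_Ioi_pos_of_intervalIntegral_pos {f : ℝ → ℝ} {p : ℝ} (hp : 0 < p)
    (hf : IntegrableOn f (Ioi 0)) (h : ∀ k : ℕ, 0 < ∫ t in k * p..(k + 1) * p, f t) :
    0 < ∫ t in Ioi 0, f t := by
  set F : ℕ → ℝ := fun N => ∫ t in (0 : ℝ)..N * p, f t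
  have hF : Monotone F := monotone_nat_of_le_succ fun N => by
    have hN : (0 : ℝ) ≤ N * p := by positivity
    simp only [F, Nat.cast_succ, ← intervalIntegral.integral_add_adjacent_intervals
      (intervalIntegrable_of_integrableOn_Ioi hf le_rfl hN)
      (intervalIntegrable_of_integrableOn_Ioi hf hN (by linarith : N * p ≤ (N + 1) * p))]
    linarith [h N]
  have hlim : Tendsto F atTop (𝓝 (∫ t in Ioi 0, f t)) :=
    intervalIntegral_tendsto_integral_Ioi 0 hf (tendsto_natCast_atTop_atTop.atTop_mul_const hp)
  calc 0 < F 1 := by simpa [F] using h 0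
    _ ≤ _ := hF.ge_of_tendsto hlim 1

theorem integral_Ioi_pos_of_add_shift_pos {f : ℝ → ℝ} {p : ℝ} (hp : 0 < p)
    (hf : IntegrableOn f (Ioi 0))
    (h : ∀ k : ℕ, ∀ t ∈ Ioo (2 * k * p) (2 * k * p + p), 0 < f t + f (t + p)) :
    0 < ∫ t in Ioi 0, f t := by
  refine integral_Ioi_pos_of_intervalIntegral_pos (mul_pos two_pos hp) hf fun k => ?_
  set a : ℝ := 2 * k * p
  have ha : 0 ≤ a := by positivity
  have hI : IntervalIntegrable f volume a (a + p) :=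
    intervalIntegrable_of_integrableOn_Ioi hf ha (by linarith)
  have hI' : IntervalIntegrable f volume (a + p) (a + p + p) :=
    intervalIntegrable_of_integrableOn_Ioi hf (by linarith) (by linarith)
  have hshift : IntervalIntegrable (fun t => f (t + p)) volume a (a + p) := by
    simpa using hI'.comp_add_right p
  calc 0 < ∫ t in a..a + p, f t + f (t + p) :=
        intervalIntegral.intervalIntegral_pos_of_pos_on (hI.add hshift) (h k) (by linarith)
    _ = ∫ t in k * (2 * p)..(k + 1) * (2 * p), f t := by
        rw [intervalIntegral.integral_add hI hshift, intervalIntegral.integral_comp_add_right,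
          intervalIntegral.integral_add_adjacent_intervals hI hI']
        congr 1 <;> ring

theorem add_pow_pos_of_abs_lt {u v : ℝ} (h : |v| < u) {m : ℕ} (hm : m ≠ 0) :
    0 < u ^ m + v ^ m := by
  have hlt : |v ^ m| < u ^ m := by
    rw [abs_pow]; exact pow_lt_pow_left₀ h (abs_nonneg v) hm
  linarith [neg_abs_le (v ^ m)]

theorem mul_pow_lt_mul_pow_of_le {a b c d : ℝ} {k m : ℕ} (ha : 0 < a) (hab : a ≤ b)
    (hd : 0 ≤ d) (hkm : k ≤ m) (h : c * a ^ k < d * b ^ k) : c * a ^ m < d * b ^ m := by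
  obtain ⟨j, rfl⟩ := Nat.exists_eq_add_of_le hkm
  rw [pow_add, pow_add, ← mul_assoc, ← mul_assoc]
  calc c * a ^ k * a ^ j < d * b ^ k * a ^ j := by gcongr
    _ ≤ d * b ^ k * b ^ j :=
      mul_le_mul_of_nonneg_left (pow_le_pow_left₀ ha.le hab j)
        (mul_nonneg hd (pow_nonneg (ha.le.trans hab) k))

theorem div_pow_add_div_pow_succ_lt {a b x : ℝ} (n : ℕ) (ha : 0 < a) (hb : 0 < b) (hx : 0 < x)
    (h : (b + x) * a ^ (n + 1) < (a - x) * b ^ (n + 1)) :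
    (x / b) ^ n + (x / b) ^ (n + 1) < (x / a) ^ n - (x / a) ^ (n + 1) := by
  have hl : (x / b) ^ n + (x / b) ^ (n + 1) = x ^ n * (b + x) / b ^ (n + 1) := by
    rw [div_pow, div_pow, pow_succ, pow_succ]; field_simp
  have hr : (x / a) ^ n - (x / a) ^ (n + 1) = x ^ n * (a - x) / a ^ (n + 1) := by
    rw [div_pow, div_pow, pow_succ, pow_succ]; field_simp
  rw [hl, hr, div_lt_div_iff₀ (by positivity) (by positivity)]
  nlinarith [mul_lt_mul_of_pos_left h (pow_pos hx n)]

theorem sin_le_sub_cube_div_pi_sq {s : ℝ} (hs₀ : 0 < s) (hsπ : s ≤ π) :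
    sin s ≤ s - s ^ 3 / (2 * π ^ 2) := by
  have hcos : cos (s / 2) ≤ 1 - 2 / π ^ 2 * (s / 2) ^ 2 :=
    cos_le_one_sub_mul_cos_sq (by rw [abs_of_pos (by linarith)]; linarith)
  have hcos₀ : 0 ≤ cos (s / 2) := cos_nonneg_of_mem_Icc ⟨by linarith, by linarith⟩
  calc sin s = 2 * sin (s / 2) * cos (s / 2) := by
        rw [← sin_two_mul, mul_div_cancel₀ s two_ne_zero]
    _ ≤ 2 * (s / 2) * cos (s / 2) := by gcongr; exact sin_le (by linarith)
    _ ≤ 2 * (s / 2) * (1 - 2 / π ^ 2 * (s / 2) ^ 2) := by gcongr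
    _ = s - s ^ 3 / (2 * π ^ 2) := by field_simp

theorem pair_ineq_pow_four_of_lt_pi {t : ℝ} (ht₀ : 0 < t) (htπ : t < π) :
    (t + π + sin t) * t ^ 4 < (t - sin t) * (t + π) ^ 4 := by
  have hπ := pi_pos
  have hd : t ^ 3 ≤ 2 * π ^ 2 * (t - sin t) := by
    have := sin_le_sub_cube_div_pi_sq ht₀ htπ.le
    rw [le_sub_comm, div_le_iff₀ (by positivity)] at this
    linarith
  have hpoly : 2 * π ^ 2 * t * (2 * t + π) < (t + π) ^ 4 + t ^ 4 := by
    nlinarith [pow_pos ht₀ 4, pow_pos ht₀ 3, pow_pos hπ 4, mul_pos (pow_pos ht₀ 3) hπ,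
      mul_pos ht₀ (pow_pos hπ 3)]
  nlinarith [mul_le_mul_of_nonneg_right hd (by positivity : (0 : ℝ) ≤ (t + π) ^ 4 + t ^ 4),
    mul_lt_mul_of_pos_left hpoly (pow_pos ht₀ 3), pow_pos hπ 2]

theorem pair_ineq_pow_four_of_two_pi_le {a x : ℝ} (ha : 2 * π ≤ a) (hx : x ≤ 1) :
    (a + π + x) * a ^ 4 < (a - x) * (a + π) ^ 4 := by
  have hπ := pi_gt_three
  have ha₀ : 0 < a := by linarith
  have hbinom : a ^ 4 + 4 * π * a ^ 3 ≤ (a + π) ^ 4 := by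
    nlinarith [mul_pos (pow_pos ha₀ 2) (pow_pos pi_pos 2), mul_pos ha₀ (pow_pos pi_pos 3),
      pow_pos pi_pos 4]
  have hlin : 0 < 3 * π * a - 2 * x * a - 4 * π * x := by nlinarith
  calc (a + π + x) * a ^ 4 < (a - x) * (a ^ 4 + 4 * π * a ^ 3) := by
        nlinarith [mul_pos (pow_pos ha₀ 3) hlin]
    _ ≤ (a - x) * (a + π) ^ 4 := by gcongr; linarith

theorem sin_pos_of_mem_Ioo_two_mul_pi {t : ℝ} (k : ℕ)
    (ht : t ∈ Ioo (2 * k * π) (2 * k * π + π)) : 0 < sin t := by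
  rw [← sin_sub_nat_mul_two_pi t k]
  exact sin_pos_of_pos_of_lt_pi (by linarith [ht.1]) (by linarith [ht.2])

theorem sin_div_pow_add_shift_pos {m : ℕ} (hm : m ≠ 0) (k : ℕ) {t : ℝ}
    (ht : t ∈ Ioo (2 * k * π) (2 * k * π + π)) :
    0 < (sin t / t) ^ m + (sin (t + π) / (t + π)) ^ m := by
  have ht₀ : 0 < t := lt_of_le_of_lt (by positivity) ht.1
  have hx := sin_pos_of_mem_Ioo_two_mul_pi k ht
  refine add_pow_pos_of_abs_lt ?_ hm
  rw [sin_add_pi, neg_div, abs_neg, abs_of_pos (by positivity)]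
  exact div_lt_div_of_pos_left hx ht₀ (by linarith [pi_pos])

theorem pair_ineq_pow_succ {n : ℕ} (hn : 3 ≤ n) (k : ℕ) {t : ℝ}
    (ht : t ∈ Ioo (2 * k * π) (2 * k * π + π)) :
    (t + π + sin t) * t ^ (n + 1) < (t - sin t) * (t + π) ^ (n + 1) := by
  have ht₀ : 0 < t := lt_of_le_of_lt (by positivity) ht.1
  refine mul_pow_lt_mul_pow_of_le ht₀ (by linarith [pi_pos])
    (by linarith [sin_lt ht₀]) (by omega : 4 ≤ n + 1) ?_
  rcases k.eq_zero_or_pos with rfl | hk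
  · exact pair_ineq_pow_four_of_lt_pi ht₀ (by simpa using ht.2)
  · refine pair_ineq_pow_four_of_two_pi_le ?_ (sin_le_one t)
    have : (1 : ℝ) ≤ k := by exact_mod_cast hk
    nlinarith [ht.1, pi_pos]

theorem sin_div_pow_sub_pow_succ_add_shift_pos {n : ℕ} (hn : 2 ≤ n) (k : ℕ) {t : ℝ}
    (ht : t ∈ Ioo (2 * k * π) (2 * k * π + π)) :
    0 < (sin t / t) ^ n - (sin t / t) ^ (n + 1) +
      ((sin (t + π) / (t + π)) ^ n - (sin (t + π) / (t + π)) ^ (n + 1)) := by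
  have ht₀ : 0 < t := lt_of_le_of_lt (by positivity) ht.1
  have hx := sin_pos_of_mem_Ioo_two_mul_pi k ht
  rw [sin_add_pi, neg_div]
  rcases n.even_or_odd with hev | hodd
  · rw [hev.neg_pow, hev.add_one.neg_pow]
    have hu₀ : 0 < sin t / t := div_pos hx ht₀
    have hu₁ : sin t / t < 1 := (div_lt_one ht₀).2 (sin_lt ht₀)
    have := pow_lt_pow_right_of_lt_one₀ hu₀ hu₁ (by omega : n < n + 1)
    have hw₀ : 0 < sin t / (t + π) := div_pos hx (by linarith [pi_pos])
    linarith [pow_pos hw₀ n, pow_pos hw₀ (n + 1)]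
  · rw [hodd.neg_pow, hodd.add_one.neg_pow]
    have hn3 : 3 ≤ n := by obtain ⟨j, rfl⟩ := hodd; omega
    have := div_pow_add_div_pow_succ_lt (b := t + π) n ht₀ (by linarith [pi_pos]) hx
      (pair_ineq_pow_succ hn3 k ht)
    linarith

theorem sin_div_sq_le (t : ℝ) : (sin t / t) ^ 2 ≤ 2 * (1 + t ^ 2)⁻¹ := by
  rcases eq_or_ne t 0 with rfl | ht
  · simp
  rw [div_pow, ← div_eq_mul_inv, div_le_div_iff₀ (by positivity) (by positivity)]
  nlinarith [sin_sq_le_sq (x := t), sin_sq_le_one t]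

theorem integrable_sin_div_pow {m : ℕ} (hm : 2 ≤ m) :
    Integrable fun t : ℝ => (sin t / t) ^ m := by
  refine (integrable_inv_one_add_sq.const_mul 2).mono'
    ((measurable_sin.div measurable_id).pow_const m).aestronglyMeasurable (ae_of_all _ fun t => ?_)
  have h₁ : |sin t / t| ≤ 1 := by
    rw [abs_div]; exact div_le_one_of_le₀ abs_sin_le_abs (abs_nonneg t)
  calc ‖(sin t / t) ^ m‖ = |sin t / t| ^ m := by rw [norm_pow, norm_eq_abs]
    _ ≤ |sin t / t| ^ 2 := pow_le_pow_of_le_one (abs_nonneg _) h₁ hm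
    _ ≤ 2 * (1 + t ^ 2)⁻¹ := by rw [sq_abs]; exact sin_div_sq_le t

theorem integral_sin_div_pow_pos {m : ℕ} (hm : 2 ≤ m) : 0 < ∫ t in Ioi 0, (sin t / t) ^ m :=
  integral_Ioi_pos_of_add_shift_pos pi_pos (integrable_sin_div_pow hm).integrableOn
    fun k _ ht => sin_div_pow_add_shift_pos (by omega) k ht

theorem integral_sin_div_pow_succ_lt {n : ℕ} (hn : 2 ≤ n) :
    ∫ t in Ioi 0, (sin t / t) ^ (n + 1) < ∫ t in Ioi 0, (sin t / t) ^ n := by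
  have hI := fun m (hm : 2 ≤ m) => (integrable_sin_div_pow hm).integrableOn (s := Ioi 0)
  rw [← sub_pos, ← integral_sub (hI n hn) (hI (n + 1) (by omega))]
  exact integral_Ioi_pos_of_add_shift_pos pi_pos ((hI n hn).sub (hI (n + 1) (by omega)))
    fun k _ ht => sin_div_pow_sub_pow_succ_add_shift_pos hn k ht

theorem integral_Ioi_mul_exp_neg_mul {t : ℝ} (ht : 0 < t) :
    ∫ s in Ioi 0, s * exp (-(t * s)) = (t ^ 2)⁻¹ := by
  have := integral_rpow_mul_exp_neg_mul_Ioi two_pos ht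
  norm_num [Gamma_two] at this
  simpa [inv_pow] using this

theorem integral_Ioi_sin_sq_mul_mul_exp_neg_mul {s : ℝ} (hs : 0 < s) :
    ∫ t in Ioi 0, sin t ^ 2 * (s * exp (-(t * s))) = 2 / (s ^ 2 + 4) := by
  set B : ℝ → ℝ := fun t => (s ^ 2 / 2 * cos (2 * t) - s * sin (2 * t)) / (s ^ 2 + 4) - 1 / 2
  have hderiv (t : ℝ) : HasDerivAt (fun t => exp (-(t * s)) * B t)
      (sin t ^ 2 * (s * exp (-(t * s)))) t := by
    have h : HasDerivAt (fun t => exp (-(t * s)) * B t) _ t :=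
      (((hasDerivAt_id t).mul_const s).neg.exp).mul
        (((((hasDerivAt_id t).const_mul 2).cos.const_mul (s ^ 2 / 2)).sub
          (((hasDerivAt_id t).const_mul 2).sin.const_mul s)).div_const (s ^ 2 + 4)
          |>.sub_const (1 / 2))
    refine h.congr_deriv ?_
    simp only [id, B, Pi.neg_apply, sin_sq_eq_half_sub]
    field_simp
    ring
  have hB : IsBoundedUnder (· ≤ ·) atTop (norm ∘ B) := by
    refine isBoundedUnder_of ⟨3 / 2, fun t => ?_⟩
    have h1 : |s ^ 2 / 2 * cos (2 * t) - s * sin (2 * t)| ≤ s ^ 2 + 4 := by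
      rw [abs_le]
      constructor <;> nlinarith [neg_one_le_cos (2 * t), cos_le_one (2 * t),
        neg_one_le_sin (2 * t), sin_le_one (2 * t), sq_nonneg (s - 1)]
    have h2 : |(s ^ 2 / 2 * cos (2 * t) - s * sin (2 * t)) / (s ^ 2 + 4)| ≤ 1 := by
      rw [abs_div, abs_of_pos (by positivity : (0 : ℝ) < s ^ 2 + 4)]
      exact div_le_one_of_le₀ h1 (by positivity)
    simp only [Function.comp, B, norm_eq_abs]
    linarith [abs_sub (((s ^ 2 / 2 * cos (2 * t) - s * sin (2 * t)) / (s ^ 2 + 4))) (1 / 2),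
      abs_of_pos (by norm_num : (0 : ℝ) < 1 / 2)]
  have hexp : Tendsto (fun t => exp (-(t * s))) atTop (𝓝 0) :=
    tendsto_exp_neg_atTop_nhds_zero.comp (tendsto_id.atTop_mul_const hs)
  have hint : IntegrableOn (fun t => sin t ^ 2 * (s * exp (-(t * s)))) (Ioi 0) := by
    refine ((exp_neg_integrableOn_Ioi 0 hs).const_mul s).mono'
      (by fun_prop) (ae_of_all _ fun t => ?_)
    rw [norm_eq_abs, abs_of_nonneg (by positivity), neg_mul, mul_comm s t]
    exact mul_le_of_le_one_left (by positivity) (sin_sq_le_one t)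
  rw [integral_Ioi_of_hasDerivAt_of_tendsto' (fun t _ => hderiv t) hint
    (hexp.zero_mul_isBoundedUnder_le hB)]
  simp only [B, zero_mul, neg_zero, exp_zero, one_mul, mul_zero, cos_zero, sin_zero]
  field_simp
  ring

theorem integral_Ioi_two_div_sq_add_four : ∫ s in Ioi 0, 2 / (s ^ 2 + 4) = π / 2 := by
  have h := integral_comp_mul_left_Ioi (fun x : ℝ => (1 + x ^ 2)⁻¹) 0
    (inv_pos.2 (two_pos (α := ℝ)))
  simp only [mul_zero, integral_Ioi_inv_one_add_sq, arctan_zero, sub_zero, inv_inv,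
    smul_eq_mul] at h
  calc ∫ s in Ioi 0, 2 / (s ^ 2 + 4) = ∫ s in Ioi 0, 2⁻¹ * (1 + (2⁻¹ * s) ^ 2)⁻¹ := by
        congr 1 with s; field_simp; ring
    _ = π / 2 := by rw [MeasureTheory.integral_const_mul, h]; ring

theorem integrableOn_mul_exp_neg_mul {t : ℝ} (ht : 0 < t) :
    IntegrableOn (fun s => s * exp (-(t * s))) (Ioi 0) := by
  simpa [rpow_one] using
    integrableOn_rpow_mul_exp_neg_mul_rpow (s := 1) (p := 1) (by norm_num) one_pos ht

theorem integral_sin_div_sq : ∫ t in Ioi 0, (sin t / t) ^ 2 = π / 2 := by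
  set K : ℝ → ℝ → ℝ := fun t s => sin t ^ 2 * (s * exp (-(t * s)))
  have hK_s : EqOn (fun t => ∫ s in Ioi 0, K t s) (fun t => (sin t / t) ^ 2) (Ioi 0) :=
    fun t ht => by
      simp only [K]
      rw [MeasureTheory.integral_const_mul, integral_Ioi_mul_exp_neg_mul ht, div_pow,
        div_eq_mul_inv]
  have hint : Integrable (Function.uncurry K)
      ((volume.restrict (Ioi 0)).prod (volume.restrict (Ioi 0))) := by
    rw [integrable_prod_iff (by simp only [K, Function.uncurry_def]; fun_prop)]
    refine ⟨?_, ?_⟩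
    · filter_upwards [ae_restrict_mem measurableSet_Ioi] with t ht
      exact (integrableOn_mul_exp_neg_mul ht).const_mul (sin t ^ 2)
    · refine (integrable_sin_div_pow le_rfl).integrableOn.congr_fun (fun t ht => ?_)
        measurableSet_Ioi
      refine (hK_s ht).symm.trans (setIntegral_congr_fun measurableSet_Ioi fun s hs => ?_)
      have hs : (0 : ℝ) ≤ s := le_of_lt hs
      exact (norm_of_nonneg (by positivity)).symm
  calc ∫ t in Ioi 0, (sin t / t) ^ 2 = ∫ t in Ioi 0, ∫ s in Ioi 0, K t s :=
        (setIntegral_congr_fun measurableSet_Ioi hK_s).symm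
    _ = ∫ s in Ioi 0, ∫ t in Ioi 0, K t s := integral_integral_swap hint
    _ = ∫ s in Ioi 0, 2 / (s ^ 2 + 4) :=
        setIntegral_congr_fun measurableSet_Ioi fun _ hs =>
          integral_Ioi_sin_sq_mul_mul_exp_neg_mul hs
    _ = π / 2 := integral_Ioi_two_div_sq_add_four

theorem sigma_strict_anti (n : ℕ) (hn : 2 ≤ n) :
    0 < sigma (n + 1) ∧ sigma (n + 1) < sigma n ∧ sigma n ≤ 1 := by
  have hc : 0 < 2 / π := by positivity
  have hle : ∫ t in Ioi 0, (sin t / t) ^ n ≤ π / 2 := by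
    rw [← integral_sin_div_sq]
    exact antitoneOn_nat_Ici_of_succ_le (f := fun m => ∫ t in Ioi 0, (sin t / t) ^ m)
      (fun m hm => (integral_sin_div_pow_succ_lt hm).le)
      (le_refl 2) hn hn
  refine ⟨mul_pos hc (integral_sin_div_pow_pos (by omega)),
    mul_lt_mul_of_pos_left (integral_sin_div_pow_succ_lt hn) hc, ?_⟩
  calc sigma n ≤ 2 / π * (π / 2) := mul_le_mul_of_nonneg_left hle hc.le
    _ = 1 := by field_simp
end

section
/- As n → ∞, σ_n · √(π n / 6) → 1; equivalently σ_n^{-1} ~ √(π n / 6). -/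
/-!
The substitution `t = s / √n` turns `√n ∫₀^∞ (sin t / t)^n dt` into `∫₀^∞ sinc (s / √n)^n ds`.
Since `sinc t = 1 - t²/6 + O(t⁴)`, the integrand tends to `exp (-s²/6)`. It is dominated by
`39 / (1 + s²)` uniformly in `n ≥ 2`: for `|t| ≤ 1` because `sinc t ≤ 1 - t²/10 ≤ exp (-t²/10)`,
and for `|t| ≥ 1` because `|sinc t| ≤ 39/40` and `|sinc t| ≤ 1/|t|`. Dominated convergence and
`∫₀^∞ exp (-s²/6) ds = √(6π)/2` give the limit.
-/

open MeasureTheory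

open Real Filter Set Topology

namespace Real

lemma sinc_two_mul (x : ℝ) : sinc (2 * x) = sinc x * cos x := by
  rcases eq_or_ne x 0 with rfl | hx
  · simp
  rw [sinc_of_ne_zero hx, sinc_of_ne_zero (mul_ne_zero two_ne_zero hx), sin_two_mul]
  field_simp

lemma abs_sinc_le_inv_abs {x : ℝ} (hx : x ≠ 0) : |sinc x| ≤ |x|⁻¹ := by
  rw [sinc_of_ne_zero hx, abs_div, div_eq_mul_inv]
  exact mul_le_of_le_one_left (by positivity) (abs_sin_le_one x)

lemma sinc_nonneg_of_abs_le_pi {x : ℝ} (hx : |x| ≤ π) : 0 ≤ sinc x := by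
  wlog h0 : 0 ≤ x generalizing x
  · simpa using this (x := -x) (by rwa [abs_neg]) (by linarith)
  rcases h0.eq_or_lt with rfl | hpos
  · simp
  rw [sinc_of_ne_zero hpos.ne']
  exact div_nonneg (sin_nonneg_of_nonneg_of_le_pi h0 ((le_abs_self x).trans hx)) h0

lemma abs_sinc_sub_one_sub_sq_div_six_le {x : ℝ} (hx : |x| ≤ 1) :
    |sinc x - (1 - x ^ 2 / 6)| ≤ x ^ 4 / 100 := by
  rcases eq_or_ne x 0 with rfl | hx0
  · simp
  have hsinc : sinc x - (1 - x ^ 2 / 6) = (sin x - (x - x ^ 3 / 6)) / x := by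
    rw [sinc_of_ne_zero hx0]
    field_simp
  rw [hsinc, abs_div, div_le_iff₀ (abs_pos.2 hx0)]
  calc |sin x - (x - x ^ 3 / 6)| ≤ |x| ^ 5 / 100 := sin_bound hx
    _ = x ^ 4 / 100 * |x| := by rw [pow_succ, (by decide : Even 4).pow_abs]; ring

lemma sinc_le_one_sub_sq_div_ten {x : ℝ} (hx : |x| ≤ 1) : sinc x ≤ 1 - x ^ 2 / 10 := by
  have hsq : x ^ 2 ≤ 1 := by simpa using sq_le_sq.2 (hx.trans_eq (abs_one).symm)
  have := (abs_le.1 (abs_sinc_sub_one_sub_sq_div_six_le hx)).2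
  nlinarith [sq_nonneg x]

lemma abs_sinc_le_of_one_le_abs {x : ℝ} (hx : 1 ≤ |x|) : |sinc x| ≤ 39 / 40 := by
  rcases le_or_gt |x| 2 with hx2 | hx2
  · have hhalf : |x / 2| ≤ 1 := by rw [abs_div, abs_two]; linarith
    have hsq : 1 / 4 ≤ (x / 2) ^ 2 := by
      rw [← sq_abs, abs_div, abs_two]; nlinarith
    calc |sinc x| = |sinc (x / 2)| * |cos (x / 2)| := by
          rw [← abs_mul, ← sinc_two_mul, mul_div_cancel₀ x two_ne_zero]
      _ ≤ sinc (x / 2) := by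
          have hnonneg := sinc_nonneg_of_abs_le_pi (hhalf.trans (by linarith [pi_gt_three]))
          rw [abs_of_nonneg hnonneg]
          exact mul_le_of_le_one_right hnonneg (abs_cos_le_one _)
      _ ≤ 39 / 40 := by linarith [sinc_le_one_sub_sq_div_ten hhalf]
  · calc |sinc x| ≤ |x|⁻¹ := abs_sinc_le_inv_abs (by rintro rfl; norm_num at hx)
      _ ≤ 2⁻¹ := inv_anti₀ two_pos hx2.le
      _ ≤ 39 / 40 := by norm_num

lemma tendsto_sinc_sub_one_div_sq :
    Tendsto (fun x => (sinc x - 1) / x ^ 2) (𝓝[≠] 0) (𝓝 (-(1 / 6))) := by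
  rw [tendsto_iff_norm_sub_tendsto_zero]
  refine squeeze_zero_norm' ?_ (?_ : Tendsto (fun x : ℝ => x ^ 2 / 100) (𝓝[≠] 0) (𝓝 0))
  · filter_upwards [self_mem_nhdsWithin, nhdsWithin_le_nhds (Metric.closedBall_mem_nhds 0 one_pos)]
      with x (hx0 : x ≠ 0) hx1
    rw [mem_closedBall_zero_iff, norm_eq_abs] at hx1
    have hsq : 0 < x ^ 2 := by positivity
    have : (sinc x - 1) / x ^ 2 - -(1 / 6) = (sinc x - (1 - x ^ 2 / 6)) / x ^ 2 := by
      field_simp; ring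
    rw [norm_norm, this, norm_eq_abs, abs_div, abs_of_pos hsq, div_le_iff₀ hsq]
    linarith [abs_sinc_sub_one_sub_sq_div_six_le hx1]
  · refine tendsto_nhdsWithin_of_tendsto_nhds ?_
    simpa using ((continuous_pow 2).tendsto' (0 : ℝ) 0 (by simp)).div_const 100

end Real

lemma tendsto_div_sqrt_natCast_nhdsNE_zero {s : ℝ} (hs : s ≠ 0) :
    Tendsto (fun n : ℕ => s / √n) atTop (𝓝[≠] 0) := by
  refine tendsto_nhdsWithin_iff.2 ⟨?_, ?_⟩
  · exact tendsto_const_nhds.div_atTop (tendsto_sqrt_atTop.comp tendsto_natCast_atTop_atTop)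
  · filter_upwards [eventually_ne_atTop 0] with n hn
    exact div_ne_zero hs (by positivity)

lemma tendsto_sinc_div_sqrt_pow (s : ℝ) :
    Tendsto (fun n : ℕ => sinc (s / √n) ^ n) atTop (𝓝 (exp (-(1 / 6) * s ^ 2))) := by
  rcases eq_or_ne s 0 with rfl | hs
  · simp
  have hlim := (tendsto_sinc_sub_one_div_sq.comp
    (tendsto_div_sqrt_natCast_nhdsNE_zero hs)).const_mul (s ^ 2)
  rw [mul_comm] at hlim
  refine (tendsto_one_add_pow_exp_of_tendsto (g := fun n => sinc (s / √n) - 1) ?_).congr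
    (by simp)
  refine hlim.congr' ?_
  filter_upwards [eventually_ne_atTop 0] with n hn
  have hn' : (n : ℝ) ≠ 0 := by exact_mod_cast hn
  simp only [Function.comp, div_pow, sq_sqrt (Nat.cast_nonneg n)]
  field_simp

lemma one_add_mul_mul_exp_neg_div_ten_le (x : ℝ) :
    (1 + x) * exp (-(x / 10)) ≤ 10 := by
  rw [exp_neg, ← div_eq_mul_inv, div_le_iff₀ (exp_pos _)]
  linarith [add_one_le_exp (x / 10)]

lemma natCast_add_one_mul_pow_sub_two_le {n : ℕ} (hn : 2 ≤ n) :
    (n + 1 : ℝ) * (39 / 40) ^ (n - 2) ≤ 39 := by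
  obtain ⟨m, rfl⟩ := Nat.exists_eq_add_of_le' hn
  rw [Nat.add_sub_cancel, show (39 / 40 : ℝ) = (1 + 1 / 39)⁻¹ by norm_num, inv_pow,
    ← div_eq_mul_inv, div_le_iff₀ (by positivity)]
  have := one_add_mul_le_pow (show (-2 : ℝ) ≤ 1 / 39 by norm_num) m
  push_cast
  linarith

lemma one_add_natCast_mul_sq_mul_abs_sinc_pow_le {n : ℕ} (hn : 2 ≤ n) (x : ℝ) :
    (1 + n * x ^ 2) * |sinc x| ^ n ≤ 39 := by
  rcases le_or_gt |x| 1 with hx | hx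
  · have hpi : |x| ≤ π := hx.trans (by linarith [pi_gt_three])
    have hpow : |sinc x| ^ n ≤ exp (-(n * x ^ 2 / 10)) := by
      calc |sinc x| ^ n ≤ exp (-(x ^ 2 / 10)) ^ n := by
            rw [abs_of_nonneg (sinc_nonneg_of_abs_le_pi hpi)]
            refine pow_le_pow_left₀ (sinc_nonneg_of_abs_le_pi hpi) ?_ n
            linarith [sinc_le_one_sub_sq_div_ten hx, add_one_le_exp (-(x ^ 2 / 10))]
        _ = exp (-(n * x ^ 2 / 10)) := by rw [← exp_nat_mul]; ring_nf
    calc (1 + n * x ^ 2) * |sinc x| ^ n ≤ (1 + n * x ^ 2) * exp (-(n * x ^ 2 / 10)) := by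
          gcongr
      _ ≤ 10 := one_add_mul_mul_exp_neg_div_ten_le _
      _ ≤ 39 := by norm_num
  · have hx0 : x ≠ 0 := by rintro rfl; norm_num at hx
    have hsq : 1 ≤ x ^ 2 := by nlinarith [sq_abs x, abs_nonneg x]
    have hpow : |sinc x| ^ n ≤ (39 / 40) ^ (n - 2) * (x ^ 2)⁻¹ := by
      calc |sinc x| ^ n = |sinc x| ^ (n - 2) * |sinc x| ^ 2 := by
            rw [← pow_add, Nat.sub_add_cancel hn]
        _ ≤ (39 / 40) ^ (n - 2) * (|x|⁻¹) ^ 2 := by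
            gcongr
            · exact abs_sinc_le_of_one_le_abs hx.le
            · exact abs_sinc_le_inv_abs hx0
        _ = (39 / 40) ^ (n - 2) * (x ^ 2)⁻¹ := by rw [inv_pow, sq_abs]
    calc (1 + n * x ^ 2) * |sinc x| ^ n
        ≤ (1 + n * x ^ 2) * ((39 / 40) ^ (n - 2) * (x ^ 2)⁻¹) := by gcongr
      _ = ((x ^ 2)⁻¹ + n) * (39 / 40) ^ (n - 2) := by field_simp
      _ ≤ (n + 1) * (39 / 40) ^ (n - 2) :=
          mul_le_mul_of_nonneg_right (by linarith [inv_le_one_of_one_le₀ hsq]) (by positivity)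
      _ ≤ 39 := natCast_add_one_mul_pow_sub_two_le hn

lemma tendsto_integral_Ioi_sinc_div_sqrt_pow :
    Tendsto (fun n : ℕ => ∫ s in Ioi 0, sinc (s / √n) ^ n) atTop (𝓝 (√(6 * π) / 2)) := by
  have hgauss : ∫ s in Ioi 0, exp (-(1 / 6) * s ^ 2) = √(6 * π) / 2 := by
    rw [integral_gaussian_Ioi]
    congr 2
    field_simp
  rw [← hgauss]
  refine tendsto_integral_filter_of_dominated_convergence (fun s => 39 * (1 + s ^ 2)⁻¹)
    (.of_forall fun n => by fun_prop) ?_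
    (integrable_inv_one_add_sq.const_mul 39).integrableOn
    (.of_forall tendsto_sinc_div_sqrt_pow)
  filter_upwards [eventually_ge_atTop 2] with n hn
  refine .of_forall fun s => ?_
  have hn0 : (n : ℝ) ≠ 0 := by positivity
  have := one_add_natCast_mul_sq_mul_abs_sinc_pow_le hn (s / √n)
  rw [div_pow, sq_sqrt (Nat.cast_nonneg n), mul_div_cancel₀ _ hn0] at this
  rw [norm_pow, norm_eq_abs, ← div_eq_mul_inv, le_div_iff₀ (by positivity), mul_comm]
  exact this

lemma integral_Ioi_comp_div {E : Type*} [NormedAddCommGroup E] [NormedSpace ℝ E] (f : ℝ → E)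
    {c : ℝ} (hc : 0 < c) : ∫ s in Ioi 0, f (s / c) = c • ∫ t in Ioi 0, f t := by
  simpa [div_eq_inv_mul] using integral_comp_mul_left_Ioi f 0 (inv_pos.2 hc)

lemma sigma_eq_integral_sinc_pow (n : ℕ) : sigma n = 2 / π * ∫ t in Ioi 0, sinc t ^ n := by
  rw [sigma]
  congr 1
  exact setIntegral_congr_fun measurableSet_Ioi fun t ht => by
    rw [sinc_of_ne_zero (ne_of_gt ht)]

theorem sigma_asymptotics :
    Filter.Tendsto (fun n : ℕ => sigma n * Real.sqrt (Real.pi * n / 6))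
      Filter.atTop (nhds 1) := by
  have hconst : 2 / π * √(π / 6) * (√(6 * π) / 2) = 1 := by
    rw [mul_assoc, ← mul_div_assoc, ← sqrt_mul (by positivity),
      show π / 6 * (6 * π) = π ^ 2 by ring, sqrt_sq pi_pos.le]
    field_simp
  have hlim := tendsto_integral_Ioi_sinc_div_sqrt_pow.const_mul (2 / π * √(π / 6))
  rw [hconst] at hlim
  refine hlim.congr' ?_
  filter_upwards [eventually_ne_atTop 0] with n hn
  rw [sigma_eq_integral_sinc_pow, integral_Ioi_comp_div (fun t => sinc t ^ n) (by positivity),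
    smul_eq_mul, mul_div_right_comm, sqrt_mul (by positivity)]
  ring
end

section
/- For any nonzero a ∈ ℤⁿ with n ≥ 2, there exists a nonzero x ∈ ℤⁿ with a₁x₁ + … + a_nx_n = 0 and ‖x‖_∞^{n−1} ≤ √n · ‖a‖_∞. -/
open Finset


private lemma sum_range_id_int (N : ℕ) : (∑ i ∈ range N, (i:ℤ)) * 2 = N * (N - 1) := by
  induction N with
  | zero => simp
  | succ k ih => rw [sum_range_succ]; push_cast; push_cast at ih; ring_nf; ring_nf at ih; linarith

private lemma sum_range_sq_int (N : ℕ) : (∑ i ∈ range N, (i:ℤ)^2) * 6 = N * (N - 1) * (2*N - 1) := by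
  induction N with
  | zero => simp
  | succ k ih => rw [sum_range_succ]; push_cast; push_cast at ih; ring_nf; ring_nf at ih; linarith

private lemma key12 (N : ℕ) :
    ((N:ℤ) * (∑ i ∈ range N, (i:ℤ)^2) - (∑ i ∈ range N, (i:ℤ))^2) * 12 = (N:ℤ)^2 * ((N:ℤ)^2 - 1) := by
  linear_combination (2*(N:ℤ)) * sum_range_sq_int N
    - 3*((∑ i ∈ range N, (i:ℤ))*2 + (N:ℤ)*((N:ℤ)-1)) * (sum_range_id_int N)

-- variance double-sum expansion
private lemma double_sum_sq {α : Type*} (s : Finset α) (g : α → ℤ) :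
    ∑ x ∈ s, ∑ y ∈ s, (g x - g y)^2
      = 2*((s.card : ℤ) * (∑ x ∈ s, (g x)^2) - (∑ x ∈ s, g x)^2) := by
  have : ∀ x, ∑ y ∈ s, (g x - g y)^2
      = (s.card : ℤ) * (g x)^2 - 2 * g x * (∑ y ∈ s, g y) + ∑ y ∈ s, (g y)^2 := by
    intro x
    rw [Finset.sum_congr rfl (fun y _ => by ring :
      ∀ y ∈ s, (g x - g y)^2 = (g x)^2 - 2 * g x * g y + (g y)^2)]
    rw [sum_add_distrib, sum_sub_distrib, sum_const, ← mul_sum, nsmul_eq_mul]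
  rw [Finset.sum_congr rfl (fun x _ => this x)]
  rw [sum_add_distrib, sum_sub_distrib, ← mul_sum, sum_const, ← sum_mul, nsmul_eq_mul,
    ← mul_sum]
  ring


private lemma gap_aux {N : ℕ} (g : Fin N → ℤ) (hg : StrictMono g) :
    ∀ (d : ℕ) (i j : Fin N), (i:ℕ) = (j:ℕ) + d → (d:ℤ) ≤ g i - g j := by
  intro d
  induction d with
  | zero => intro i j h; have : i = j := Fin.ext (by omega); simp [this]
  | succ d ih =>
      intro i j h
      have hlt : (j:ℕ) + d < N := by have := i.isLt; omega
      set i' : Fin N := ⟨(j:ℕ) + d, hlt⟩ with hi'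
      have h1 : (d:ℤ) ≤ g i' - g j := ih i' j rfl
      have h2 : g i' < g i := hg (by simp [Fin.lt_def, hi', h])
      have h3 : g i' + 1 ≤ g i := h2
      push_cast
      linarith

private lemma gap_sq {N : ℕ} (g : Fin N → ℤ) (hg : StrictMono g) (i j : Fin N) :
    ((i:ℤ) - (j:ℤ))^2 ≤ (g i - g j)^2 := by
  have main : ∀ i j : Fin N, (j:ℕ) ≤ (i:ℕ) → ((i:ℤ) - (j:ℤ))^2 ≤ (g i - g j)^2 := by
    intro i j h
    obtain ⟨d, hd⟩ : ∃ d, (i:ℕ) = (j:ℕ) + d := ⟨(i:ℕ) - (j:ℕ), by omega⟩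
    have h1 := gap_aux g hg d i j hd
    have h2 : ((i:ℤ) - (j:ℤ)) = (d:ℤ) := by push_cast [hd]; ring
    have h3 : (0:ℤ) ≤ (d:ℤ) := Int.natCast_nonneg d
    exact sq_le_sq' (by linarith) (by linarith)
  rcases le_total (j:ℕ) (i:ℕ) with h | h
  · exact main i j h
  · have := main j i h
    calc ((i:ℤ) - (j:ℤ))^2 = ((j:ℤ) - (i:ℤ))^2 := by ring
    _ ≤ (g j - g i)^2 := this
    _ = (g i - g j)^2 := by ring


private lemma box_single {n m : ℕ} (F : ℕ → ℤ) (i : Fin n) :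
    ∑ x ∈ Fintype.piFinset (fun _ : Fin n => range m), F (x i)
      = (∑ t ∈ range m, F t) * (m:ℤ)^(n-1) := by
  have h1 : ∀ x : Fin n → ℕ, F (x i)
      = ∏ k, (if k = i then F (x k) else 1) := by
    intro x
    rw [Finset.prod_ite_eq' univ i (fun k => F (x k))]
    simp
  calc ∑ x ∈ Fintype.piFinset (fun _ : Fin n => range m), F (x i)
      = ∑ x ∈ Fintype.piFinset (fun _ : Fin n => range m),
          ∏ k, (if k = i then F (x k) else 1) := Finset.sum_congr rfl (fun x _ => h1 x)
    _ = ∏ k : Fin n, ∑ t ∈ range m, (if k = i then F t else 1) :=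
        Finset.sum_prod_piFinset (range m) (fun k t => if k = i then F t else 1)
    _ = ∏ k : Fin n, (if k = i then (∑ t ∈ range m, F t) else (m:ℤ)) := by
        refine Finset.prod_congr rfl (fun k _ => ?_)
        by_cases hk : k = i <;> simp [hk]
    _ = (∑ t ∈ range m, F t) * (m:ℤ)^(n-1) := by
        rw [← Finset.prod_mul_prod_compl {i}]
        rw [Finset.prod_singleton, if_pos rfl]
        congr 1
        rw [Finset.prod_congr rfl (fun k hk => by
          rw [if_neg (by simpa using (Finset.mem_compl.mp hk))] :
            ∀ k ∈ ({i} : Finset (Fin n))ᶜ, (if k = i then (∑ t ∈ range m, F t) else (m:ℤ)) = (m:ℤ))]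
        rw [Finset.prod_const, Finset.card_compl, Finset.card_singleton, Fintype.card_fin]

private lemma box_pair {n m : ℕ} (F G : ℕ → ℤ) (i j : Fin n) (hij : i ≠ j) :
    ∑ x ∈ Fintype.piFinset (fun _ : Fin n => range m), F (x i) * G (x j)
      = (∑ t ∈ range m, F t) * (∑ t ∈ range m, G t) * (m:ℤ)^(n-2) := by
  have h1 : ∀ x : Fin n → ℕ, F (x i) * G (x j)
      = ∏ k, (if k = i then F (x k) else if k = j then G (x k) else 1) := by
    intro x
    rw [← Finset.prod_mul_prod_compl {i, j}]
    have hc : ∀ k ∈ ({i, j} : Finset (Fin n))ᶜ,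
        (if k = i then F (x k) else if k = j then G (x k) else 1) = 1 := by
      intro k hk
      simp only [Finset.mem_compl, Finset.mem_insert, Finset.mem_singleton] at hk
      push_neg at hk
      rw [if_neg hk.1, if_neg hk.2]
    rw [Finset.prod_congr rfl hc, Finset.prod_const_one, mul_one,
      Finset.prod_pair hij, if_pos rfl, if_neg hij.symm, if_pos rfl]
  calc ∑ x ∈ Fintype.piFinset (fun _ : Fin n => range m), F (x i) * G (x j)
      = ∑ x ∈ Fintype.piFinset (fun _ : Fin n => range m),
          ∏ k, (if k = i then F (x k) else if k = j then G (x k) else 1) :=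
        Finset.sum_congr rfl (fun x _ => h1 x)
    _ = ∏ k : Fin n, ∑ t ∈ range m, (if k = i then F t else if k = j then G t else 1) :=
        Finset.sum_prod_piFinset (range m) (fun k t => if k = i then F t else if k = j then G t else 1)
    _ = ∏ k : Fin n, (if k = i then (∑ t ∈ range m, F t)
          else if k = j then (∑ t ∈ range m, G t) else (m:ℤ)) := by
        refine Finset.prod_congr rfl (fun k _ => ?_)
        by_cases hk : k = i
        · simp [hk]
        · by_cases hk' : k = j <;> simp [hk, hk']
    _ = (∑ t ∈ range m, F t) * (∑ t ∈ range m, G t) * (m:ℤ)^(n-2) := by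
        rw [← Finset.prod_mul_prod_compl {i, j}]
        have hc : ∀ k ∈ ({i, j} : Finset (Fin n))ᶜ,
            (if k = i then (∑ t ∈ range m, F t)
              else if k = j then (∑ t ∈ range m, G t) else (m:ℤ)) = (m:ℤ) := by
          intro k hk
          simp only [Finset.mem_compl, Finset.mem_insert, Finset.mem_singleton] at hk
          push_neg at hk
          rw [if_neg hk.1, if_neg hk.2]
        rw [Finset.prod_congr rfl hc, Finset.prod_const,
          Finset.prod_pair hij, if_pos rfl, if_neg hij.symm, if_pos rfl,
          Finset.card_compl, Finset.card_pair hij, Fintype.card_fin]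

section
variable {n m : ℕ} (a : Fin n → ℤ)
private lemma box_f_sum :
    ∑ x ∈ Fintype.piFinset (fun _ : Fin n => range m), (∑ i, a i * ((x i : ℕ) : ℤ))
      = (∑ i, a i) * (∑ t ∈ range m, (t:ℤ)) * (m:ℤ)^(n-1) := by
  rw [Finset.sum_comm]
  have h : ∀ i : Fin n, ∑ x ∈ Fintype.piFinset (fun _ : Fin n => range m), a i * ((x i : ℕ) : ℤ)
      = a i * ((∑ t ∈ range m, (t:ℤ)) * (m:ℤ)^(n-1)) := by
    intro i
    rw [← Finset.mul_sum, box_single (fun t => (t:ℤ)) i]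
  rw [Finset.sum_congr rfl (fun i _ => h i), ← Finset.sum_mul]
  ring

private lemma box_f_sq :
    ∑ x ∈ Fintype.piFinset (fun _ : Fin n => range m), (∑ i, a i * ((x i : ℕ) : ℤ))^2
      = (∑ i, (a i)^2) * (∑ t ∈ range m, (t:ℤ)^2) * (m:ℤ)^(n-1)
        + ((∑ i, a i)^2 - (∑ i, (a i)^2)) * (∑ t ∈ range m, (t:ℤ))^2 * (m:ℤ)^(n-2) := by
  have expand : ∀ x : Fin n → ℕ, (∑ i, a i * ((x i : ℕ) : ℤ))^2
      = ∑ i, ∑ j, (a i * a j) * (((x i : ℕ) : ℤ) * ((x j : ℕ) : ℤ)) := by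
    intro x
    rw [sq, Finset.sum_mul_sum]
    exact Finset.sum_congr rfl fun i _ => Finset.sum_congr rfl fun j _ => by ring
  rw [Finset.sum_congr rfl (fun x _ => expand x), Finset.sum_comm]
  have h : ∀ i : Fin n,
      ∑ x ∈ Fintype.piFinset (fun _ : Fin n => range m),
        ∑ j, (a i * a j) * (((x i : ℕ) : ℤ) * ((x j : ℕ) : ℤ))
      = a i * a i * ((∑ t ∈ range m, (t:ℤ)^2) * (m:ℤ)^(n-1))
        + ((∑ j, a j) - a i) * a i * ((∑ t ∈ range m, (t:ℤ))^2 * (m:ℤ)^(n-2)) := by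
    intro i
    rw [Finset.sum_comm]
    have hj : ∀ j : Fin n, ∑ x ∈ Fintype.piFinset (fun _ : Fin n => range m),
        (a i * a j) * (((x i : ℕ) : ℤ) * ((x j : ℕ) : ℤ))
        = (a i * a j) * (∑ x ∈ Fintype.piFinset (fun _ : Fin n => range m),
            ((x i : ℕ) : ℤ) * ((x j : ℕ) : ℤ)) := fun j => (Finset.mul_sum _ _ _).symm
    rw [Finset.sum_congr rfl (fun j _ => hj j)]
    rw [← Finset.add_sum_erase _ _ (Finset.mem_univ i)]
    have hdiag : ∑ x ∈ Fintype.piFinset (fun _ : Fin n => range m),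
        ((x i : ℕ) : ℤ) * ((x i : ℕ) : ℤ)
        = (∑ t ∈ range m, (t:ℤ)^2) * (m:ℤ)^(n-1) := by
      rw [← box_single (fun t => (t:ℤ)^2) i]
      exact Finset.sum_congr rfl fun x _ => (sq _).symm
    have hoff : ∀ j ∈ Finset.univ.erase i,
        (a i * a j) * (∑ x ∈ Fintype.piFinset (fun _ : Fin n => range m),
          ((x i : ℕ) : ℤ) * ((x j : ℕ) : ℤ))
        = (a i * a j) * ((∑ t ∈ range m, (t:ℤ)) * (∑ t ∈ range m, (t:ℤ)) * (m:ℤ)^(n-2)) := by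
      intro j hj
      rw [box_pair (fun t => (t:ℤ)) (fun t => (t:ℤ)) i j (Finset.ne_of_mem_erase hj).symm]
    rw [hdiag, Finset.sum_congr rfl hoff]
    have : ∑ j ∈ Finset.univ.erase i, (a i * a j)
          * ((∑ t ∈ range m, (t:ℤ)) * (∑ t ∈ range m, (t:ℤ)) * (m:ℤ)^(n-2))
        = (∑ j ∈ Finset.univ.erase i, a j)
          * (a i * ((∑ t ∈ range m, (t:ℤ)) * (∑ t ∈ range m, (t:ℤ)) * (m:ℤ)^(n-2))) := by
      calc ∑ j ∈ Finset.univ.erase i, (a i * a j)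
            * ((∑ t ∈ range m, (t:ℤ)) * (∑ t ∈ range m, (t:ℤ)) * (m:ℤ)^(n-2))
          = ∑ j ∈ Finset.univ.erase i, a j
            * (a i * ((∑ t ∈ range m, (t:ℤ)) * (∑ t ∈ range m, (t:ℤ)) * (m:ℤ)^(n-2))) :=
            Finset.sum_congr rfl fun j _ => by ring
        _ = (∑ j ∈ Finset.univ.erase i, a j)
            * (a i * ((∑ t ∈ range m, (t:ℤ)) * (∑ t ∈ range m, (t:ℤ)) * (m:ℤ)^(n-2))) := by
            rw [← Finset.sum_mul]
    rw [this, Finset.sum_erase_eq_sub (Finset.mem_univ i)]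
    ring
  rw [Finset.sum_congr rfl (fun i _ => h i), Finset.sum_add_distrib]
  have e1 : ∑ i, a i * a i * ((∑ t ∈ range m, (t:ℤ)^2) * (m:ℤ)^(n-1))
      = (∑ i, (a i)^2) * (∑ t ∈ range m, (t:ℤ)^2) * (m:ℤ)^(n-1) := by
    calc ∑ i, a i * a i * ((∑ t ∈ range m, (t:ℤ)^2) * (m:ℤ)^(n-1))
        = ∑ i, (a i)^2 * ((∑ t ∈ range m, (t:ℤ)^2) * (m:ℤ)^(n-1)) :=
          Finset.sum_congr rfl fun i _ => by ring
      _ = (∑ i, (a i)^2) * ((∑ t ∈ range m, (t:ℤ)^2) * (m:ℤ)^(n-1)) := by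
          rw [← Finset.sum_mul]
      _ = (∑ i, (a i)^2) * (∑ t ∈ range m, (t:ℤ)^2) * (m:ℤ)^(n-1) := by ring
  have e2 : ∑ i, ((∑ j, a j) - a i) * a i * ((∑ t ∈ range m, (t:ℤ))^2 * (m:ℤ)^(n-2))
      = ((∑ i, a i)^2 - (∑ i, (a i)^2)) * (∑ t ∈ range m, (t:ℤ))^2 * (m:ℤ)^(n-2) := by
    rw [← Finset.sum_mul]
    have : ∑ i, ((∑ j, a j) - a i) * a i
        = (∑ i, a i)^2 - (∑ i, (a i)^2) := by
      have : ∀ i ∈ Finset.univ, ((∑ j, a j) - a i) * a i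
          = (∑ j, a j) * a i - (a i)^2 := fun i _ => by ring
      rw [Finset.sum_congr rfl this, Finset.sum_sub_distrib, ← Finset.mul_sum, sq]
    rw [this]
    ring
  rw [e1, e2]
end

private lemma core {n m : ℕ} (hn : 2 ≤ n) (hm : 2 ≤ m) (a : Fin n → ℤ)
    (hinj : Set.InjOn (fun x : Fin n → ℕ => ∑ i, a i * ((x i : ℕ) : ℤ))
      (Fintype.piFinset (fun _ : Fin n => range m))) :
    (m:ℤ)^(2*(n-1)) ≤ ∑ i, (a i)^2 := by
  classical
  set T : Finset (Fin n → ℕ) := Fintype.piFinset (fun _ : Fin n => range m) with hT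
  set f : (Fin n → ℕ) → ℤ := fun x => ∑ i, a i * ((x i : ℕ) : ℤ) with hf
  have hcardT : T.card = m^n := by
    simp [hT, Fintype.card_piFinset]
  set V : Finset ℤ := T.image f with hV
  have hVcard : V.card = m^n := by
    rw [hV, Finset.card_image_of_injOn hinj, hcardT]
  -- sums over V equal double sums over T
  have hinj' : ∀ x ∈ T, ∀ y ∈ T, f x = f y → x = y := fun x hx y hy h => hinj hx hy h
  have hVT : ∑ v ∈ V, ∑ w ∈ V, (v - w)^2 = ∑ x ∈ T, ∑ y ∈ T, (f x - f y)^2 := by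
    rw [hV, Finset.sum_image hinj']
    exact Finset.sum_congr rfl fun x _ => by rw [Finset.sum_image hinj']
  -- lower bound via sortedness
  set e := V.orderEmbOfFin hVcard with he
  have himage : Finset.image e Finset.univ = V := by
    apply Finset.coe_injective
    rw [Finset.coe_image, Finset.coe_univ, Set.image_univ, Finset.range_orderEmbOfFin]
  have hVsum : ∀ G : ℤ → ℤ, ∑ v ∈ V, G v = ∑ i : Fin (m^n), G (e i) := by
    intro G
    rw [← himage, Finset.sum_image (fun x _ y _ h => e.injective h)]
  have hlow : ∑ i ∈ range (m^n), ∑ j ∈ range (m^n), ((i:ℤ) - (j:ℤ))^2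
      ≤ ∑ v ∈ V, ∑ w ∈ V, (v - w)^2 := by
    rw [hVsum (fun v => ∑ w ∈ V, (v - w)^2)]
    have : ∀ i : Fin (m^n), ∑ w ∈ V, (e i - w)^2 = ∑ j : Fin (m^n), (e i - e j)^2 :=
      fun i => hVsum (fun w => (e i - w)^2)
    rw [Finset.sum_congr rfl (fun i _ => this i)]
    rw [← Fin.sum_univ_eq_sum_range (fun i => ∑ j ∈ range (m^n), ((i:ℤ) - (j:ℤ))^2)]
    refine Finset.sum_le_sum fun i _ => ?_
    rw [← Fin.sum_univ_eq_sum_range (fun j => (((i:ℕ):ℤ) - (j:ℤ))^2)]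
    exact Finset.sum_le_sum fun j _ => gap_sq e e.strictMono i j
  -- identities
  have hid1 : ∑ x ∈ T, ∑ y ∈ T, (f x - f y)^2
      = 2*(((m:ℤ)^n) * (∑ x ∈ T, (f x)^2) - (∑ x ∈ T, f x)^2) := by
    rw [double_sum_sq T f, hcardT]
    push_cast
    ring
  have hid2 : ∑ i ∈ range (m^n), ∑ j ∈ range (m^n), ((i:ℤ) - (j:ℤ))^2
      = 2*(((m:ℤ)^n) * (∑ i ∈ range (m^n), (i:ℤ)^2) - (∑ i ∈ range (m^n), (i:ℤ))^2) := by
    rw [double_sum_sq (range (m^n)) (fun i => (i:ℤ)), Finset.card_range]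
    push_cast
    ring
  -- main comparison
  have hmain : ((m:ℤ)^n) * (∑ i ∈ range (m^n), (i:ℤ)^2) - (∑ i ∈ range (m^n), (i:ℤ))^2
      ≤ ((m:ℤ)^n) * (∑ x ∈ T, (f x)^2) - (∑ x ∈ T, f x)^2 := by
    have := hlow
    rw [hVT, hid1, hid2] at this
    linarith
  -- multiply by 12 and use closed forms
  have h12R : (((m:ℤ)^n) * (∑ i ∈ range (m^n), (i:ℤ)^2) - (∑ i ∈ range (m^n), (i:ℤ))^2) * 12
      = ((m:ℤ)^n)^2 * (((m:ℤ)^n)^2 - 1) := by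
    have := key12 (m^n)
    push_cast at this
    convert this using 2
  have h1 : (m:ℤ)^n * (m:ℤ)^(n-1) = (m:ℤ)^(2*(n-1)) * (m:ℤ) := by
    rw [← pow_add, ← pow_succ]; congr 1; omega
  have h2 : (m:ℤ)^n * (m:ℤ)^(n-2) = (m:ℤ)^(2*(n-1)) := by
    rw [← pow_add]; congr 1; omega
  have h3 : ((m:ℤ)^(n-1))^2 = (m:ℤ)^(2*(n-1)) := by
    rw [← pow_mul]; congr 1; omega
  have h12L : (((m:ℤ)^n) * (∑ x ∈ T, (f x)^2) - (∑ x ∈ T, f x)^2) * 12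
      = (∑ i, (a i)^2) * ((m:ℤ)^2 * ((m:ℤ)^2 - 1)) * (m:ℤ)^(2*(n-1)) := by
    rw [hf]
    rw [box_f_sum a, box_f_sq a]
    linear_combination (12*(∑ i, (a i)^2)*(∑ t ∈ range m, (t:ℤ)^2)) * h1
      + (12*((∑ i, a i)^2 - (∑ i, (a i)^2))*(∑ t ∈ range m, (t:ℤ))^2) * h2
      - (12*(∑ i, a i)^2*(∑ t ∈ range m, (t:ℤ))^2) * h3
      + ((∑ i, (a i)^2)*(m:ℤ)^(2*(n-1))) * key12 m
  -- final arithmetic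
  set S2 := ∑ i, (a i)^2 with hS2
  set u := (m:ℤ)^(2*(n-1)) with hu
  set w := (m:ℤ)^2 with hw
  have hupos : 0 < u := by positivity
  have hwpos : (0:ℤ) < w - 1 := by
    have : (2:ℤ) ≤ (m:ℤ) := by exact_mod_cast hm
    nlinarith
  have huw : ((m:ℤ)^n)^2 = u * w := by
    rw [hu, hw, ← pow_mul, ← pow_add]; congr 1; omega
  have hu1 : 1 ≤ u := hupos
  have hineq : S2 * (w * (w - 1)) * u ≥ (u*w) * ((u*w) - 1) := by
    have h := mul_le_mul_of_nonneg_right hmain (by norm_num : (0:ℤ) ≤ 12)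
    rw [h12R, h12L, huw] at h
    linarith
  have c1 : (u*w - 1) * (u*w) ≤ (S2 * (w-1)) * (u*w) := by linarith [hineq]
  have c2 : u*w - 1 ≤ S2 * (w - 1) :=
    le_of_mul_le_mul_right c1 (by positivity)
  have c3 : u * (w - 1) ≤ u*w - 1 := by linarith
  have c4 : u * (w-1) ≤ S2 * (w-1) := le_trans c3 c2
  exact le_of_mul_le_mul_right c4 hwpos

theorem siegel_lemma_sqrt (n : ℕ) (hn : 2 ≤ n) (a : Fin n → ℤ) (ha : a ≠ 0) :
    ∃ x : Fin n → ℤ, x ≠ 0 ∧ (∑ j, a j * x j = 0) ∧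
      ‖(fun j => (x j : ℝ))‖ ^ (n - 1) ≤ Real.sqrt n * ‖(fun j => (a j : ℝ))‖ := by
  classical
  obtain ⟨i₀, hi₀⟩ : ∃ i, a i ≠ 0 := Function.ne_iff.mp ha
  set A : ℕ := Finset.univ.sup (fun i => (a i).natAbs) with hA
  have hA1 : 1 ≤ A := le_trans (Int.natAbs_pos.mpr hi₀) (Finset.le_sup (f := fun i => (a i).natAbs) (Finset.mem_univ i₀))
  have hAbound : ∀ i, (a i).natAbs ≤ A := fun i => Finset.le_sup (f := fun i => (a i).natAbs) (Finset.mem_univ i)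
  have hnormA : (A:ℝ) ≤ ‖(fun j => ((a j : ℤ) : ℝ))‖ := by
    obtain ⟨i, -, hi⟩ := Finset.exists_mem_eq_sup Finset.univ ⟨i₀, Finset.mem_univ i₀⟩
      (fun i => (a i).natAbs)
    rw [hA, hi]
    calc (((a i).natAbs : ℕ) : ℝ) = |((a i : ℤ) : ℝ)| := by
          rw [Nat.cast_natAbs, Int.cast_abs]
      _ = ‖((fun j => ((a j : ℤ) : ℝ)) i)‖ := rfl
      _ ≤ ‖(fun j => ((a j : ℤ) : ℝ))‖ := norm_le_pi_norm (fun j => ((a j : ℤ) : ℝ)) i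
  have hn1 : (1:ℝ) ≤ (n:ℝ) := by exact_mod_cast le_trans (by norm_num) hn
  have hsqrt1 : (1:ℝ) ≤ Real.sqrt n := by
    rw [← Real.sqrt_one]; exact Real.sqrt_le_sqrt hn1
  have hsqrtn : Real.sqrt n ≤ (n:ℝ) := by
    calc Real.sqrt n ≤ Real.sqrt ((n:ℝ)^2) := Real.sqrt_le_sqrt (by nlinarith)
      _ = (n:ℝ) := Real.sqrt_sq (by linarith)
  set P : ℕ → Prop := fun b => ((b:ℕ):ℝ) ^ (n-1) ≤ Real.sqrt n * A with hP
  have hP1 : P 1 := by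
    show ((1:ℕ):ℝ)^(n-1) ≤ Real.sqrt n * A
    push_cast
    rw [one_pow]
    have : (1:ℝ) ≤ (A:ℝ) := by exact_mod_cast hA1
    nlinarith
  have hBk : 1 ≤ n*A := Nat.one_le_iff_ne_zero.mpr (by positivity)
  set B : ℕ := Nat.findGreatest P (n*A) with hB
  have hB1 : 1 ≤ B := Nat.le_findGreatest hBk hP1
  have hPB : P B := Nat.findGreatest_spec hBk hP1
  have hnotPB1 : ¬ P (B+1) := by
    by_cases hle : B + 1 ≤ n*A
    · exact Nat.findGreatest_is_greatest (Nat.lt_succ_self B) hle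
    · intro hcontra
      have hx : ((B+1:ℕ):ℝ) ≤ ((B+1:ℕ):ℝ)^(n-1) := by
        refine le_self_pow₀ ?_ (by omega)
        push_cast; linarith
      have hy : Real.sqrt n * A ≤ (n:ℝ) * A :=
        mul_le_mul_of_nonneg_right hsqrtn (by positivity)
      have hz : ((n*A:ℕ):ℝ) < ((B+1:ℕ):ℝ) := by exact_mod_cast Nat.lt_of_not_le hle
      have hcontra' : ((B+1:ℕ):ℝ)^(n-1) ≤ Real.sqrt n * A := hcontra
      push_cast at hx hy hz hcontra'
      linarith
  set m := B + 1 with hm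
  by_cases hinj : Set.InjOn (fun x : Fin n → ℕ => ∑ i, a i * ((x i : ℕ) : ℤ))
      (Fintype.piFinset (fun _ : Fin n => range m))
  · exfalso
    apply hnotPB1
    have hcore := core hn (by omega) a hinj
    have hS2 : ∑ i, (a i)^2 ≤ (n:ℤ) * (A:ℤ)^2 := by
      calc ∑ i, (a i)^2 ≤ ∑ _i : Fin n, (A:ℤ)^2 := by
            refine Finset.sum_le_sum fun i _ => ?_
            have h1 : |a i| ≤ (A:ℤ) := by
              rw [Int.abs_eq_natAbs]
              exact_mod_cast hAbound i
            calc (a i)^2 = |a i|^2 := (sq_abs _).symm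
              _ ≤ (A:ℤ)^2 := pow_le_pow_left₀ (abs_nonneg _) h1 2
        _ = (n:ℤ) * (A:ℤ)^2 := by
            rw [Finset.sum_const, Finset.card_univ, Fintype.card_fin, nsmul_eq_mul]
    have h1 : ((m:ℕ):ℝ)^(2*(n-1)) ≤ (n:ℝ) * (A:ℝ)^2 := by
      exact_mod_cast le_trans hcore hS2
    show ((m:ℕ):ℝ)^(n-1) ≤ Real.sqrt n * A
    have h2 : (((m:ℕ):ℝ)^(n-1))^2 ≤ (Real.sqrt n * A)^2 := by
      rw [mul_pow, Real.sq_sqrt (by linarith : (0:ℝ) ≤ (n:ℝ))]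
      rw [← pow_mul, mul_comm (n-1) 2]
      exact h1
    calc ((m:ℕ):ℝ)^(n-1) = Real.sqrt ((((m:ℕ):ℝ)^(n-1))^2) := (Real.sqrt_sq (by positivity)).symm
      _ ≤ Real.sqrt ((Real.sqrt n * A)^2) := Real.sqrt_le_sqrt h2
      _ = Real.sqrt n * A := Real.sqrt_sq (by positivity)
  · simp only [Set.InjOn, not_forall] at hinj
    obtain ⟨x, hx, y, hy, hfeq, hne⟩ := hinj
    rw [Finset.mem_coe, Fintype.mem_piFinset] at hx hy
    refine ⟨fun i => (x i : ℤ) - (y i : ℤ), ?_, ?_, ?_⟩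
    · intro hzero
      apply hne
      funext i
      have := congr_fun hzero i
      simp only [Pi.zero_apply, sub_eq_zero] at this
      exact_mod_cast this
    · have : ∑ i, a i * (((x i : ℕ):ℤ) - ((y i : ℕ):ℤ))
          = (∑ i, a i * ((x i : ℕ):ℤ)) - (∑ i, a i * ((y i : ℕ):ℤ)) := by
        rw [← Finset.sum_sub_distrib]
        exact Finset.sum_congr rfl fun i _ => by ring
      rw [this, hfeq, sub_self]
    · have hbound : ∀ i, ‖(((x i : ℤ) - (y i : ℤ) : ℤ) : ℝ)‖ ≤ (B:ℝ) := by
        intro i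
        have hxi : x i < m := Finset.mem_range.mp (hx i)
        have hyi : y i < m := Finset.mem_range.mp (hy i)
        rw [Real.norm_eq_abs, ← Int.cast_abs]
        have : |(x i : ℤ) - (y i : ℤ)| ≤ (B:ℤ) := by
          rw [abs_le]
          constructor <;> [skip; skip] <;>
          · push_cast
            omega
        exact_mod_cast this
      have hnorm : ‖(fun j => (((x j : ℤ) - (y j : ℤ) : ℤ) : ℝ))‖ ≤ (B:ℝ) :=
        (pi_norm_le_iff_of_nonneg (by positivity)).mpr hbound
      calc ‖(fun j => (((x j : ℤ) - (y j : ℤ) : ℤ) : ℝ))‖ ^ (n-1) ≤ (B:ℝ)^(n-1) :=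
            pow_le_pow_left₀ (norm_nonneg _) hnorm (n-1)
        _ ≤ Real.sqrt n * A := hPB
        _ ≤ Real.sqrt n * ‖(fun j => ((a j : ℤ) : ℝ))‖ :=
            mul_le_mul_of_nonneg_left hnormA (Real.sqrt_nonneg _)
end

section
/- Let {a₁, …, a_n} be a sum-distinct set of positive integers (all 2ⁿ subset sums are pairwise distinct) with a₁ < a₂ < … < a_n and n ≥ 5. Then a_n > σ_n · 2^{n−1}. -/
/-!
If `a` is sum-distinct with largest element `M`, the `2ⁿ` signed sums `∑ ±aᵢ` are distinct
integers of one parity, so at most `M` of them lie in `(-M, M]`. Inserting the elements in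
increasing order, the number `N(s, r)` of signed sums in `(-r, r]` obeys the recursion
`N(s ∪ {b}, r) = N(s, r + a_b) + N(s, r - a_b)` (for `a_b ≤ r`), which shows that it is at least
the count for unit weights in `(-u, u]` whenever `u · max a ≤ r`; for `u = 1` that count is
`C(n, ⌊n/2⌋)`.
Hence `a_n ≥ C(n, ⌊n/2⌋)`.

On the other side, Euler's product `sin t / t = ∏ (1 - t² / (k π)²)` gives
`sin t / t ≤ exp (-t² / 6)` on `(0, π]`, so splitting the integral at `π` yields
`σₙ ≤ √(6 / (π n)) + 2 / (πⁿ (n - 1))`, and the Wallis-type estimate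
`256 n C(n, ⌊n/2⌋)² ≥ 125 · 4ⁿ` shows that this times `2ⁿ⁻¹` is below `C(n, ⌊n/2⌋)` for `n ≥ 5`.
-/

open MeasureTheory

section BalancedCount

open Finset

variable {ι : Type*}

/-- `2 * ∑ i ∈ T, a i - ∑ i ∈ s, a i` is the signed sum `∑_{i ∈ T} aᵢ - ∑_{i ∈ s \ T} aᵢ`. -/
def balancedCount (a : ι → ℤ) (s : Finset ι) (r : ℤ) : ℕ :=
  #{T ∈ s.powerset | -r < 2 * ∑ i ∈ T, a i - ∑ i ∈ s, a i ∧ 2 * ∑ i ∈ T, a i - ∑ i ∈ s, a i ≤ r}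

theorem balancedCount_insert [DecidableEq ι] {a : ι → ℤ} {s : Finset ι} {b : ι} {r : ℤ}
    (hb : b ∉ s) (h0 : 0 ≤ a b) (hr : a b ≤ r) :
    balancedCount a (insert b s) r =
      balancedCount a s (r + a b) + balancedCount a s (r - a b) := by
  simp only [balancedCount, card_filter, sum_powerset_insert hb, ← sum_add_distrib, sum_insert hb]
  refine sum_congr rfl fun T hT => ?_
  rw [sum_insert fun h => hb (mem_powerset.1 hT h)]
  split_ifs <;> omega

theorem balancedCount_eq_zero_of_nonpos {a : ι → ℤ} {s : Finset ι} {r : ℤ} (hr : r ≤ 0) :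
    balancedCount a s r = 0 := by
  simp only [balancedCount, card_eq_zero, filter_eq_empty_iff]
  omega

theorem balancedCount_le_toNat {a : ι → ℤ} {s : Finset ι}
    (hinj : Set.InjOn (fun T => ∑ i ∈ T, a i) s.powerset) (r : ℤ) :
    balancedCount a s r ≤ r.toNat := by
  rw [balancedCount, ← card_range r.toNat]
  -- the values `2 * ∑ T - ∑ s` all have the parity of `∑ s`, so halving is injective on them
  refine card_le_card_of_injOn (fun T => (2 * ∑ i ∈ T, a i - ∑ i ∈ s, a i + r - 1).toNat / 2)
    (fun T hT => ?_) fun T₁ hT₁ T₂ hT₂ h => ?_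
  · simp only [coe_filter, Set.mem_ofPred_eq, coe_range, Set.mem_Iio] at hT ⊢
    omega
  · simp only [coe_filter, Set.mem_ofPred_eq] at hT₁ hT₂ h
    exact hinj hT₁.1 hT₂.1 (by simp only; omega)

theorem balancedCount_one_one (s : Finset ι) :
    balancedCount 1 s 1 = (#s).choose (#s / 2) := by
  have : balancedCount 1 s 1 = #(powersetCard ((#s + 1) / 2) s) := by
    rw [powersetCard_eq_filter, balancedCount]
    congr 1
    refine filter_congr fun T _ => ?_
    simp only [Pi.one_apply, sum_const, nsmul_eq_mul, mul_one]
    omega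
  rw [this, card_powersetCard]
  rcases Nat.even_or_odd' #s with ⟨m, hm | hm⟩ <;> rw [hm]
  · congr 1; omega
  · rw [show (2 * m + 1 + 1) / 2 = m + 1 by omega, show (2 * m + 1) / 2 = m by omega,
      Nat.choose_symm_half]

theorem balancedCount_one_le {a : ι → ℤ} {s : Finset ι}
    (hpos : ∀ i ∈ s, 0 < a i) {u r : ℤ} (hur : u ≤ r) (hbound : ∀ i ∈ s, u * a i ≤ r) :
    balancedCount 1 s u ≤ balancedCount a s r := by
  classical
  induction s using Finset.induction_on_max_value a generalizing u r with
  | empty =>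
    rw [balancedCount, balancedCount, powerset_empty, filter_singleton, filter_singleton]
    simp only [sum_empty, mul_zero, sub_zero]
    split_ifs <;> simp
    omega
  | insert b s hb hmax ih =>
    rcases le_or_gt u 0 with hu | hu
    · simp [balancedCount_eq_zero_of_nonpos hu]
    have hc : 0 < a b := hpos b (mem_insert_self b s)
    have hucr : u * a b ≤ r := hbound b (mem_insert_self b s)
    have hpos' : ∀ i ∈ s, 0 < a i := fun i hi => hpos i (mem_insert_of_mem hi)
    have hbound' : ∀ i ∈ s, u * a i ≤ r := fun i hi => hbound i (mem_insert_of_mem hi)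
    rw [balancedCount_insert hb zero_le_one (by simp only [Pi.one_apply]; omega),
      balancedCount_insert hb hc.le (by nlinarith)]
    simp only [Pi.one_apply]
    gcongr
    · exact ih hpos' (by omega) fun i hi => by nlinarith [hmax i hi, hbound' i hi]
    · exact ih hpos' (by nlinarith) fun i hi => by nlinarith [hmax i hi, hbound' i hi]

theorem choose_half_le_of_injOn {a : ι → ℤ} {s : Finset ι} {M : ℤ}
    (hs : s.Nonempty) (hpos : ∀ i ∈ s, 0 < a i) (hM : ∀ i ∈ s, a i ≤ M)
    (hinj : Set.InjOn (fun T => ∑ i ∈ T, a i) s.powerset) :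
    ((#s).choose (#s / 2) : ℤ) ≤ M := by
  obtain ⟨i, hi⟩ := hs
  have h1M : 1 ≤ M := (hpos i hi).trans_le (hM i hi)
  have := (balancedCount_one_le hpos h1M (by simpa using hM)).trans
    (balancedCount_le_toNat hinj M)
  rw [balancedCount_one_one] at this
  omega

end BalancedCount

section CentralBinomial

open Nat

theorem mul_centralBinom_sq_le {k p q : ℕ} (h : p * (k + 1) ^ 2 ≤ q * (2 * (2 * k + 1)) ^ 2) :
    p * centralBinom k ^ 2 ≤ q * centralBinom (k + 1) ^ 2 := by
  refine Nat.le_of_mul_le_mul_left ?_ (pow_pos k.succ_pos 2)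
  calc (k + 1) ^ 2 * (p * centralBinom k ^ 2) = p * (k + 1) ^ 2 * centralBinom k ^ 2 := by ring
    _ ≤ q * (2 * (2 * k + 1)) ^ 2 * centralBinom k ^ 2 := by gcongr
    _ = q * ((k + 1) * centralBinom (k + 1)) ^ 2 := by rw [succ_mul_centralBinom_succ]; ring
    _ = (k + 1) ^ 2 * (q * centralBinom (k + 1) ^ 2) := by ring

theorem two_mul_choose_odd_eq_centralBinom (m : ℕ) :
    2 * (2 * m + 1).choose m = centralBinom (m + 1) := by
  rw [centralBinom_eq_two_mul_choose, show 2 * (m + 1) = 2 * m + 1 + 1 by ring, choose_succ_succ,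
    choose_symm_half]
  ring

theorem sixteen_mul_choose_half_sq_le (n : ℕ) :
    16 * n * n.choose (n / 2) ^ 2 ≤ (n + 2) * (n + 2).choose ((n + 2) / 2) ^ 2 := by
  rcases Nat.even_or_odd' n with ⟨m, rfl | rfl⟩
  · rw [show (2 * m + 2) / 2 = m + 1 by omega, show 2 * m / 2 = m by omega,
      show 2 * m + 2 = 2 * (m + 1) by ring, ← centralBinom_eq_two_mul_choose,
      ← centralBinom_eq_two_mul_choose]
    exact mul_centralBinom_sq_le (by nlinarith)
  · rw [show (2 * m + 1 + 2) / 2 = m + 1 by omega, show (2 * m + 1) / 2 = m by omega,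
      show 2 * m + 1 + 2 = 2 * (m + 1) + 1 by ring]
    have h := mul_centralBinom_sq_le (k := m + 1) (p := 16 * (2 * m + 1)) (q := 2 * (m + 1) + 1)
      (by nlinarith)
    rw [← two_mul_choose_odd_eq_centralBinom, ← two_mul_choose_odd_eq_centralBinom] at h
    nlinarith

theorem four_pow_le_mul_choose_half_sq : ∀ n, 5 ≤ n → 125 * 4 ^ n ≤ 256 * n * n.choose (n / 2) ^ 2
  | 5, _ => by decide
  | 6, _ => by decide
  | n + 7, _ =>
    calc 125 * 4 ^ (n + 7) = 16 * (125 * 4 ^ (n + 5)) := by ring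
      _ ≤ 16 * (256 * (n + 5) * (n + 5).choose ((n + 5) / 2) ^ 2) :=
        Nat.mul_le_mul_left 16 (four_pow_le_mul_choose_half_sq (n + 5) (by omega))
      _ = 256 * (16 * (n + 5) * (n + 5).choose ((n + 5) / 2) ^ 2) := by ring
      _ ≤ 256 * (n + 7) * (n + 7).choose ((n + 7) / 2) ^ 2 := by
        rw [mul_assoc 256]
        exact Nat.mul_le_mul_left 256 (sixteen_mul_choose_half_sq_le (n + 5))

end CentralBinomial

open Real Filter Topology

section EulerProduct

open Finset

theorem tendsto_sum_range_one_div_add_one_sq :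
    Tendsto (fun N => ∑ j ∈ range N, 1 / ((j : ℝ) + 1) ^ 2) atTop (𝓝 (π ^ 2 / 6)) := by
  have h := (hasSum_nat_add_iff' 1).mpr hasSum_zeta_two
  simp only [Nat.cast_add, Nat.cast_one, range_one, sum_singleton, Nat.cast_zero] at h
  simpa using h.tendsto_sum_nat

theorem sin_le_mul_exp_neg_sq {t : ℝ} (h0 : 0 ≤ t) (hπ : t ≤ π) :
    sin t ≤ t * exp (-(t ^ 2 / 6)) := by
  obtain ⟨x, rfl⟩ : ∃ x, t = π * x := ⟨t / π, by field_simp⟩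
  have hx0 : 0 ≤ x := nonneg_of_mul_nonneg_right h0 pi_pos
  have hx1 : x ≤ 1 := (mul_le_iff_le_one_right pi_pos).1 hπ
  have hlim : Tendsto (fun N => π * x * exp (-(x ^ 2 * ∑ j ∈ range N, 1 / ((j : ℝ) + 1) ^ 2)))
      atTop (𝓝 (π * x * exp (-(x ^ 2 * (π ^ 2 / 6))))) :=
    ((continuous_exp.tendsto _).comp
      ((tendsto_sum_range_one_div_add_one_sq.const_mul (x ^ 2)).neg)).const_mul (π * x)
  calc sin (π * x) ≤ π * x * exp (-(x ^ 2 * (π ^ 2 / 6))) :=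
        le_of_tendsto_of_tendsto' (tendsto_euler_sin_prod x) hlim fun N => ?_
    _ = π * x * exp (-((π * x) ^ 2 / 6)) := by ring_nf
  refine mul_le_mul_of_nonneg_left ?_ h0
  rw [mul_sum, ← sum_neg_distrib, exp_sum]
  refine prod_le_prod (fun j _ => ?_) fun j _ => ?_
  · have : (1 : ℝ) ≤ ((j : ℝ) + 1) ^ 2 := one_le_pow₀ (by linarith [j.cast_nonneg (α := ℝ)])
    rw [sub_nonneg, div_le_one (by positivity)]
    nlinarith
  · rw [mul_one_div]
    linarith [add_one_le_exp (-(x ^ 2 / ((j : ℝ) + 1) ^ 2))]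

end EulerProduct

section SincIntegral

open Set

theorem abs_sin_div_pow_le_exp {t : ℝ} (h0 : 0 < t) (hπ : t ≤ π) (n : ℕ) :
    |(sin t / t) ^ n| ≤ exp (-(n / 6) * t ^ 2) := by
  have hsin : 0 ≤ sin t / t := div_nonneg (sin_nonneg_of_nonneg_of_le_pi h0.le hπ) h0.le
  have hle : sin t / t ≤ exp (-(t ^ 2 / 6)) := by
    rw [div_le_iff₀ h0, mul_comm]
    exact sin_le_mul_exp_neg_sq h0.le hπ
  calc |(sin t / t) ^ n| = (sin t / t) ^ n := abs_of_nonneg (pow_nonneg hsin n)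
    _ ≤ exp (-(t ^ 2 / 6)) ^ n := pow_le_pow_left₀ hsin hle n
    _ = exp (-(n / 6) * t ^ 2) := by rw [← exp_nat_mul]; ring_nf

theorem abs_sin_div_pow_le_rpow {t : ℝ} (h0 : 0 < t) (n : ℕ) :
    |(sin t / t) ^ n| ≤ t ^ (-(n : ℝ)) := by
  rw [abs_pow, rpow_neg h0.le, rpow_natCast, ← inv_pow, abs_div, abs_of_pos h0, ← one_div]
  gcongr
  exact abs_sin_le_one t

theorem aestronglyMeasurable_sin_div_pow (n : ℕ) (μ : Measure ℝ) :
    AEStronglyMeasurable (fun t => (sin t / t) ^ n) μ :=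
  ((measurable_sin.div measurable_id).pow_const n).aestronglyMeasurable

theorem integrableOn_sin_div_pow_Ioc {n : ℕ} (hn : 0 < n) :
    IntegrableOn (fun t => (sin t / t) ^ n) (Ioc 0 π) :=
  (integrable_exp_neg_mul_sq (by positivity : (0 : ℝ) < n / 6)).integrableOn.mono'
    (aestronglyMeasurable_sin_div_pow n _)
    (ae_restrict_of_forall_mem measurableSet_Ioc fun t ht => abs_sin_div_pow_le_exp ht.1 ht.2 n)

theorem integrableOn_sin_div_pow_Ioi_pi {n : ℕ} (hn : 1 < n) :
    IntegrableOn (fun t => (sin t / t) ^ n) (Ioi π) :=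
  (integrableOn_Ioi_rpow_of_lt (neg_lt_neg (Nat.one_lt_cast.2 hn)) pi_pos).mono'
    (aestronglyMeasurable_sin_div_pow n _)
    (ae_restrict_of_forall_mem measurableSet_Ioi fun _ ht =>
      abs_sin_div_pow_le_rpow (pi_pos.trans ht) n)

theorem setIntegral_sin_div_pow_Ioc_le {n : ℕ} (hn : 0 < n) :
    ∫ t in Ioc 0 π, (sin t / t) ^ n ≤ √(6 * π / n) / 2 := by
  have hb : (0 : ℝ) < n / 6 := by positivity
  calc ∫ t in Ioc 0 π, (sin t / t) ^ n ≤ ∫ t in Ioc 0 π, exp (-(n / 6) * t ^ 2) :=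
        setIntegral_mono_on (integrableOn_sin_div_pow_Ioc hn)
          (integrable_exp_neg_mul_sq hb).integrableOn measurableSet_Ioc
          fun t ht => (le_abs_self _).trans (abs_sin_div_pow_le_exp ht.1 ht.2 n)
    _ ≤ ∫ t in Ioi 0, exp (-(n / 6) * t ^ 2) :=
        setIntegral_mono_set (integrable_exp_neg_mul_sq hb).integrableOn
          (ae_of_all _ fun _ => (exp_pos _).le) Ioc_subset_Ioi_self.eventuallyLE
    _ = √(6 * π / n) / 2 := by rw [integral_gaussian_Ioi]; congr 2; field_simp

theorem setIntegral_sin_div_pow_Ioi_pi_le {n : ℕ} (hn : 1 < n) :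
    ∫ t in Ioi π, (sin t / t) ^ n ≤ π / (π ^ n * (n - 1)) := by
  have hn' : -(n : ℝ) < -1 := neg_lt_neg (Nat.one_lt_cast.2 hn)
  calc ∫ t in Ioi π, (sin t / t) ^ n ≤ ∫ t in Ioi π, t ^ (-(n : ℝ)) :=
        setIntegral_mono_on (integrableOn_sin_div_pow_Ioi_pi hn)
          (integrableOn_Ioi_rpow_of_lt hn' pi_pos) measurableSet_Ioi
          fun t ht => (le_abs_self _).trans (abs_sin_div_pow_le_rpow (pi_pos.trans ht) n)
    _ = π / (π ^ n * (n - 1)) := by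
        have : (n : ℝ) - 1 ≠ 0 := (sub_pos.2 (Nat.one_lt_cast.2 hn)).ne'
        rw [integral_Ioi_rpow_of_lt hn' pi_pos, show -(n : ℝ) + 1 = -(n - 1) by ring,
          rpow_neg pi_pos.le, rpow_sub_one pi_pos.ne', rpow_natCast]
        field_simp

theorem sigma_le {n : ℕ} (hn : 1 < n) :
    sigma n ≤ √(6 * π / n) / π + 2 / (π ^ n * (n - 1)) := by
  have hsplit : ∫ t in Ioi 0, (sin t / t) ^ n =
      (∫ t in Ioc 0 π, (sin t / t) ^ n) + ∫ t in Ioi π, (sin t / t) ^ n := by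
    rw [← Ioc_union_Ioi_eq_Ioi pi_pos.le]
    exact setIntegral_union (Ioc_disjoint_Ioi le_rfl) measurableSet_Ioi
      (integrableOn_sin_div_pow_Ioc (by omega)) (integrableOn_sin_div_pow_Ioi_pi hn)
  calc sigma n ≤ 2 / π * (√(6 * π / n) / 2 + π / (π ^ n * (n - 1))) := by
        rw [sigma, hsplit]
        gcongr
        exacts [setIntegral_sin_div_pow_Ioc_le (by omega), setIntegral_sin_div_pow_Ioi_pi_le hn]
    _ = √(6 * π / n) / π + 2 / (π ^ n * (n - 1)) := by
        have : (n : ℝ) - 1 ≠ 0 := (sub_pos.2 (Nat.one_lt_cast.2 hn)).ne'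
        field_simp

end SincIntegral

theorem bound_mul_two_pow_lt_choose_half {n : ℕ} (hn : 5 ≤ n) :
    (√(6 * π / n) / π + 2 / (π ^ n * (n - 1))) * 2 ^ (n - 1) < n.choose (n / 2) := by
  have hB10 : (10 : ℝ) ≤ n.choose (n / 2) := by
    have h : 10 ≤ n.choose (n / 2) := (Nat.choose_le_choose 2 hn).trans (Nat.choose_le_middle 2 n)
    exact_mod_cast h
  have hB4 : (125 * 4 ^ n : ℝ) ≤ 256 * n * n.choose (n / 2) ^ 2 := by
    exact_mod_cast four_pow_le_mul_choose_half_sq n hn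
  generalize ((n.choose (n / 2) : ℕ) : ℝ) = B at hB10 hB4 ⊢
  set X : ℝ := 2 ^ (n - 1)
  have hX : 0 < X := by positivity
  have hn0 : (0 : ℝ) < n := by positivity
  have hn4 : (4 : ℝ) ≤ n - 1 := by
    have : (5 : ℝ) ≤ n := by exact_mod_cast hn
    linarith
  have h2X : (2 : ℝ) ^ n = 2 * X := by rw [← pow_succ', Nat.sub_add_cancel (by omega)]
  have hB : 500 * X ^ 2 ≤ 256 * n * B ^ 2 := by
    have h4 : (4 : ℝ) ^ n = 4 * X ^ 2 := by
      rw [show (4 : ℝ) = 2 ^ 2 by norm_num, ← pow_mul, mul_comm, pow_mul, h2X]; ring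
    linarith
  -- `6 * 256 / 500 < (99 / 100) ^ 2 * π` is where the constant `99 / 100` comes from
  have hmain : √(6 * π / n) / π * X ≤ 99 / 100 * B := by
    rw [div_mul_eq_mul_div, div_le_iff₀ pi_pos, ← sqrt_sq hX.le, ← sqrt_mul' _ (sq_nonneg X),
      sqrt_le_left (by positivity), div_mul_eq_mul_div, div_le_iff₀ hn0]
    have hπ := pi_gt_d2
    nlinarith [mul_le_mul_of_nonneg_left hB pi_pos.le,
      mul_pos (mul_pos pi_pos hn0) (sq_pos_of_pos (by linarith : 0 < B))]
  have htail : 2 / (π ^ n * (n - 1)) * X ≤ 1 / 30 := by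
    have hq : 2 / π ≤ 2 / 3 := div_le_div_of_nonneg_left (by norm_num) (by norm_num) pi_gt_three.le
    calc 2 / (π ^ n * (n - 1)) * X = (2 / π) ^ n / (n - 1) := by
          rw [div_pow, h2X]; field_simp
      _ ≤ (2 / π) ^ 5 / 4 :=
          div_le_div₀ (by positivity)
            (pow_le_pow_of_le_one (by positivity) ((div_le_one pi_pos).2 two_le_pi) hn)
            (by norm_num) hn4
      _ ≤ (2 / 3) ^ 5 / 4 := by gcongr
      _ ≤ 1 / 30 := by norm_num
  rw [add_mul]
  linarith

theorem sum_distinct_lower_bound (n : ℕ) (hn : 5 ≤ n) (a : Fin n → ℤ)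
    (hpos : ∀ i, 0 < a i) (hmono : StrictMono a)
    (hsd : ∀ S T : Finset (Fin n), ∑ i ∈ S, a i = ∑ i ∈ T, a i → S = T) :
    (a ⟨n - 1, by omega⟩ : ℝ) > sigma n * 2 ^ (n - 1) := by
  have hchoose : (n.choose (n / 2) : ℤ) ≤ a ⟨n - 1, by omega⟩ := by
    simpa using choose_half_le_of_injOn (Finset.univ_nonempty_iff.2 ⟨⟨0, by omega⟩⟩)
      (fun i _ => hpos i) (fun i _ => hmono.monotone (Fin.mk_le_mk.2 (by omega)))
      (fun S _ T _ h => hsd S T h)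
  calc sigma n * 2 ^ (n - 1)
      ≤ (√(6 * π / n) / π + 2 / (π ^ n * (n - 1))) * 2 ^ (n - 1) := by
        gcongr; exact sigma_le (by omega)
    _ < n.choose (n / 2) := bound_mul_two_pow_lt_choose_half hn
    _ ≤ a ⟨n - 1, by omega⟩ := by exact_mod_cast hchoose
end

section
/- As n → ∞, σ_n 2^{n−1} · √(2πn/3) / 2ⁿ → 1; equivalently σ_n 2^{n−1} ~ 2ⁿ / √(2πn/3). -/
open MeasureTheory

/-! Laplace's method. Near `0`, `sin t / t = 1 - t² / 6 + O(t⁴)`, so after the substitution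
`t = s / √n` the integrand `(sin t / t) ^ n` on `(0, 1]` tends to `exp (-s² / 6)` and is dominated
by `exp (-s² / 8)`; hence `√n ∫₀¹ (sin t / t) ^ n → √(6π) / 2 = √(3π / 2)`. On `(1, ∞)` the
integrand is at most `t ^ (-n)`, whose integral `1 / (n - 1)` is `o(1 / √n)`. Finally
`σ_n 2^(n-1) √(2πn/3) / 2^n = √n ∫₀^∞ (sin t / t) ^ n · √(2π/3) / π`. -/

open Filter Set Real Topology

section Laplace

variable {f : ℝ → ℝ} {a b : ℝ}

noncomputable def scaledPow (f : ℝ → ℝ) (n : ℕ) : ℝ → ℝ :=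
  (Ioc 0 √n).indicator fun s ↦ f (s / √n) ^ n

lemma setIntegral_Ioc_comp_div (g : ℝ → ℝ) {c : ℝ} (hc : 0 < c) :
    ∫ s in Ioc 0 c, g (s / c) = c * ∫ t in Ioc 0 1, g t := by
  rw [← intervalIntegral.integral_of_le hc.le, intervalIntegral.integral_comp_div g hc.ne',
    zero_div, div_self hc.ne', smul_eq_mul, intervalIntegral.integral_of_le zero_le_one]

lemma integral_scaledPow {n : ℕ} (hn : n ≠ 0) :
    ∫ s in Ioi 0, scaledPow f n s = √n * ∫ t in Ioc 0 1, f t ^ n := by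
  rw [scaledPow, setIntegral_indicator measurableSet_Ioc,
    inter_eq_self_of_subset_right Ioc_subset_Ioi_self,
    setIntegral_Ioc_comp_div (f · ^ n) (by positivity)]

lemma abs_scaledPow_le (hdom : ∀ t ∈ Ioc 0 1, |f t| ≤ exp (-b * t ^ 2)) (n : ℕ) (s : ℝ) :
    |scaledPow f n s| ≤ exp (-b * s ^ 2) := by
  by_cases hs : s ∈ Ioc 0 √n
  · have hr : 0 < √n := hs.1.trans_le hs.2
    have hn : (0 : ℝ) < n := sqrt_pos.1 hr
    have ht : s / √n ∈ Ioc 0 1 := ⟨div_pos hs.1 hr, (div_le_one hr).2 hs.2⟩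
    calc |scaledPow f n s| = |f (s / √n)| ^ n := by
          rw [scaledPow, indicator_of_mem hs, abs_pow]
      _ ≤ exp (-b * (s / √n) ^ 2) ^ n := pow_le_pow_left₀ (abs_nonneg _) (hdom _ ht) n
      _ = exp (-b * s ^ 2) := by
          rw [← exp_nat_mul, div_pow, sq_sqrt hn.le]
          field_simp
  · rw [scaledPow, indicator_of_notMem hs, abs_zero]
    exact (exp_pos _).le

lemma tendsto_scaledPow (hf : Tendsto (fun t ↦ (f t - 1) / t ^ 2) (𝓝[>] 0) (𝓝 (-a)))
    {s : ℝ} (hs : 0 < s) :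
    Tendsto (fun n ↦ scaledPow f n s) atTop (𝓝 (exp (-a * s ^ 2))) := by
  have hsqrt : Tendsto (fun n : ℕ ↦ √n) atTop atTop :=
    tendsto_sqrt_atTop.comp tendsto_natCast_atTop_atTop
  have hscale : Tendsto (fun n : ℕ ↦ s / √n) atTop (𝓝[>] 0) :=
    tendsto_nhdsWithin_iff.2 ⟨tendsto_const_nhds.div_atTop hsqrt,
      (eventually_gt_atTop 0).mono fun n hn ↦
        div_pos hs (sqrt_pos.2 (Nat.cast_pos.2 hn))⟩
  have hexp : Tendsto (fun n : ℕ ↦ n * (f (s / √n) - 1)) atTop (𝓝 (-a * s ^ 2)) := by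
    rw [mul_comm]
    refine ((hf.comp hscale).const_mul (s ^ 2)).congr' ?_
    filter_upwards [eventually_gt_atTop 0] with n hn
    have hn' : (0 : ℝ) < n := by exact_mod_cast hn
    simp only [Function.comp_apply, div_pow, sq_sqrt hn'.le]
    field_simp
  have hpow := tendsto_one_add_pow_exp_of_tendsto hexp
  refine hpow.congr' ?_
  filter_upwards [hsqrt.eventually_ge_atTop s] with n hn
  rw [scaledPow, indicator_of_mem (show s ∈ Ioc 0 √n from ⟨hs, hn⟩), add_sub_cancel]

theorem tendsto_sqrt_mul_integral_Ioc_pow (hmeas : Measurable f)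
    (hf : Tendsto (fun t ↦ (f t - 1) / t ^ 2) (𝓝[>] 0) (𝓝 (-a)))
    (hb : 0 < b) (hdom : ∀ t ∈ Ioc 0 1, |f t| ≤ exp (-b * t ^ 2)) :
    Tendsto (fun n : ℕ ↦ √n * ∫ t in Ioc 0 1, f t ^ n) atTop (𝓝 (√(π / a) / 2)) := by
  rw [← integral_gaussian_Ioi]
  have hmeasF (n : ℕ) : AEStronglyMeasurable (scaledPow f n) (volume.restrict (Ioi 0)) :=
    (((hmeas.comp (measurable_id.div_const _)).pow_const n).indicator
      measurableSet_Ioc).aestronglyMeasurable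
  have hdct := tendsto_integral_of_dominated_convergence _ hmeasF
    (integrable_exp_neg_mul_sq hb).integrableOn
    (fun n ↦ .of_forall fun s ↦ abs_scaledPow_le hdom n s)
    ((ae_restrict_iff' measurableSet_Ioi).2 (.of_forall fun s hs ↦ tendsto_scaledPow hf hs))
  refine hdct.congr' ?_
  filter_upwards [eventually_ne_atTop 0] with n hn using integral_scaledPow hn

end Laplace

section Tail

variable {g : ℝ → ℝ}

lemma abs_pow_le_rpow_neg (hg : ∀ t > 1, |g t| ≤ t⁻¹) {t : ℝ} (ht : 1 < t) (n : ℕ) :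
    |g t ^ n| ≤ t ^ (-(n : ℝ)) := by
  have ht0 : 0 < t := one_pos.trans ht
  rw [abs_pow, rpow_neg ht0.le, rpow_natCast, ← inv_pow]
  exact pow_le_pow_left₀ (abs_nonneg _) (hg t ht) n

lemma integrableOn_Ioi_one_pow (hmeas : Measurable g) (hg : ∀ t > 1, |g t| ≤ t⁻¹) {n : ℕ}
    (hn : 2 ≤ n) : IntegrableOn (fun t ↦ g t ^ n) (Ioi 1) := by
  have hn' : (2 : ℝ) ≤ n := by exact_mod_cast hn
  refine (integrableOn_Ioi_rpow_of_lt (a := -(n : ℝ)) (by linarith) one_pos).mono'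
    (hmeas.pow_const n).aestronglyMeasurable ?_
  exact (ae_restrict_iff' measurableSet_Ioi).2 (.of_forall fun t ht ↦ abs_pow_le_rpow_neg hg ht n)

lemma abs_integral_Ioi_one_pow_le (hg : ∀ t > 1, |g t| ≤ t⁻¹) {n : ℕ} (hn : 2 ≤ n) :
    |∫ t in Ioi 1, g t ^ n| ≤ 1 / (n - 1) := by
  have hn' : (2 : ℝ) ≤ n := by exact_mod_cast hn
  have hlt : -(n : ℝ) < -1 := by linarith
  calc |∫ t in Ioi 1, g t ^ n| ≤ ∫ t in Ioi 1, t ^ (-(n : ℝ)) :=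
        norm_integral_le_of_norm_le (f := fun t ↦ g t ^ n) (integrableOn_Ioi_rpow_of_lt hlt one_pos)
          ((ae_restrict_iff' measurableSet_Ioi).2 (.of_forall fun t ht ↦
            abs_pow_le_rpow_neg hg ht n))
    _ = 1 / (n - 1) := by
        rw [integral_Ioi_rpow_of_lt hlt one_pos, one_rpow, neg_div, ← div_neg, neg_add', neg_neg]

lemma tendsto_sqrt_mul_integral_Ioi_one_pow (hg : ∀ t > 1, |g t| ≤ t⁻¹) :
    Tendsto (fun n : ℕ ↦ √n * ∫ t in Ioi 1, g t ^ n) atTop (𝓝 0) := by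
  have hlim : Tendsto (fun n : ℕ ↦ 2 / √n) atTop (𝓝 0) :=
    tendsto_const_nhds.div_atTop (tendsto_sqrt_atTop.comp tendsto_natCast_atTop_atTop)
  refine squeeze_zero_norm' ?_ hlim
  filter_upwards [eventually_ge_atTop 2] with n hn
  have hn' : (2 : ℝ) ≤ n := by exact_mod_cast hn
  have hr : 0 < √n := sqrt_pos.2 (by linarith)
  calc ‖√n * ∫ t in Ioi 1, g t ^ n‖ ≤ √n * (1 / (n - 1)) := by
        rw [norm_mul, norm_of_nonneg hr.le]
        exact mul_le_mul_of_nonneg_left (abs_integral_Ioi_one_pow_le hg hn) hr.le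
    _ ≤ 2 / √n := by
        rw [mul_one_div, div_le_div_iff₀ (by linarith) hr, ← sq, sq_sqrt (by linarith)]
        linarith

end Tail

section SinDiv

lemma abs_sin_div_sub_le {t : ℝ} (ht0 : t ≠ 0) (ht : |t| ≤ 1) :
    |sin t / t - (1 - t ^ 2 / 6)| ≤ |t| ^ 4 / 100 := by
  have hpos : 0 < |t| := abs_pos.2 ht0
  rw [show sin t / t - (1 - t ^ 2 / 6) = (sin t - (t - t ^ 3 / 6)) / t by field_simp, abs_div,
    div_le_iff₀ hpos]
  calc |sin t - (t - t ^ 3 / 6)| ≤ |t| ^ 5 / 100 := sin_bound ht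
    _ = |t| ^ 4 / 100 * |t| := by ring

lemma tendsto_sin_div_sub_one_div_sq :
    Tendsto (fun t ↦ (sin t / t - 1) / t ^ 2) (𝓝[≠] 0) (𝓝 (-(1 / 6))) := by
  rw [tendsto_iff_norm_sub_tendsto_zero]
  have hlim : Tendsto (fun t : ℝ ↦ t ^ 2 / 100) (𝓝[≠] 0) (𝓝 0) :=
    tendsto_nhdsWithin_of_tendsto_nhds
      (by simpa using ((continuous_pow 2).div_const (100 : ℝ)).tendsto 0)
  refine squeeze_zero' (.of_forall fun _ ↦ norm_nonneg _) ?_ hlim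
  filter_upwards [self_mem_nhdsWithin,
    nhdsWithin_le_nhds (Metric.closedBall_mem_nhds (0 : ℝ) one_pos)] with t (ht0 : t ≠ 0) ht1
  rw [mem_closedBall_zero_iff, norm_eq_abs] at ht1
  have hsq : 0 < t ^ 2 := by positivity
  rw [norm_eq_abs, show (sin t / t - 1) / t ^ 2 - -(1 / 6) = (sin t / t - (1 - t ^ 2 / 6)) / t ^ 2
    by field_simp; ring, abs_div, abs_of_pos hsq, div_le_iff₀ hsq]
  calc |sin t / t - (1 - t ^ 2 / 6)| ≤ |t| ^ 4 / 100 := abs_sin_div_sub_le ht0 ht1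
    _ = t ^ 2 / 100 * t ^ 2 := by rw [show |t| ^ 4 = (|t| ^ 2) ^ 2 by ring, sq_abs]; ring

lemma abs_sin_div_le_exp {t : ℝ} (ht0 : t ≠ 0) (ht : |t| ≤ 1) :
    |sin t / t| ≤ exp (-(1 / 8) * t ^ 2) := by
  have hsq : t ^ 2 ≤ 1 := by nlinarith [sq_abs t, abs_nonneg t]
  have hquart : |t| ^ 4 ≤ t ^ 2 := by
    rw [show |t| ^ 4 = (t ^ 2) ^ 2 by rw [← sq_abs t]; ring]
    nlinarith
  have hclose := abs_le.1 (abs_sin_div_sub_le ht0 ht)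
  have hexp := add_one_le_exp (-(1 / 8) * t ^ 2)
  exact abs_le.2 ⟨by linarith [exp_pos (-(1 / 8) * t ^ 2)], by linarith⟩

lemma abs_sin_div_le_one (t : ℝ) : |sin t / t| ≤ 1 := by
  rw [abs_div]
  exact div_le_one_of_le₀ abs_sin_le_abs (abs_nonneg t)

lemma abs_sin_div_le_inv {t : ℝ} (ht : 0 < t) : |sin t / t| ≤ t⁻¹ := by
  rw [abs_div, abs_of_pos ht, ← one_div]
  exact div_le_div_of_nonneg_right (abs_sin_le_one t) ht.le

theorem tendsto_sqrt_mul_integral_sin_div_pow :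
    Tendsto (fun n : ℕ ↦ √n * ∫ t in Ioi 0, (sin t / t) ^ n) atTop (𝓝 (√(3 * π / 2))) := by
  have hmeas : Measurable fun t ↦ sin t / t := measurable_sin.div measurable_id
  have hdom : ∀ t ∈ Ioc (0 : ℝ) 1, |sin t / t| ≤ exp (-(1 / 8) * t ^ 2) := fun t ht ↦
    abs_sin_div_le_exp ht.1.ne' (abs_le.2 ⟨by linarith [ht.1], ht.2⟩)
  have hinv : ∀ t > (1 : ℝ), |sin t / t| ≤ t⁻¹ := fun t ht ↦ abs_sin_div_le_inv (one_pos.trans ht)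
  have hcore := tendsto_sqrt_mul_integral_Ioc_pow hmeas
    (tendsto_sin_div_sub_one_div_sq.mono_left (nhdsWithin_mono _ fun t ht ↦ ne_of_gt ht))
    (by norm_num) hdom
  have hval : √(π / (1 / 6)) / 2 = √(3 * π / 2) := by
    rw [show π / (1 / 6) = 2 ^ 2 * (3 * π / 2) by ring, sqrt_mul (by positivity),
      sqrt_sq zero_le_two]
    ring
  rw [hval] at hcore
  have hsum := hcore.add (tendsto_sqrt_mul_integral_Ioi_one_pow hinv)
  rw [add_zero] at hsum
  refine hsum.congr' ?_
  filter_upwards [eventually_ge_atTop 2] with n hn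
  have hIoc : IntegrableOn (fun t ↦ (sin t / t) ^ n) (Ioc 0 1) :=
    .of_bound measure_Ioc_lt_top (hmeas.pow_const n).aestronglyMeasurable 1 <| .of_forall fun t ↦ by
      rw [norm_pow, norm_eq_abs]
      exact pow_le_one₀ (abs_nonneg _) (abs_sin_div_le_one t)
  rw [← mul_add, ← setIntegral_union (Ioc_disjoint_Ioi le_rfl) measurableSet_Ioi hIoc
    (integrableOn_Ioi_one_pow hmeas hinv hn), Ioc_union_Ioi_eq_Ioi zero_le_one]

end SinDiv

theorem sigma_bound_asymptotics :
    Filter.Tendsto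
      (fun n : ℕ => sigma n * 2 ^ (n - 1) * Real.sqrt (2 * Real.pi * n / 3) / 2 ^ n)
      Filter.atTop (nhds 1) := by
  have hconst : √(3 * π / 2) * (√(2 * π / 3) / π) = 1 := by
    rw [← mul_div_assoc, ← sqrt_mul (by positivity),
      show 3 * π / 2 * (2 * π / 3) = π ^ 2 by ring, sqrt_sq pi_pos.le, div_self pi_ne_zero]
  have hlim := tendsto_sqrt_mul_integral_sin_div_pow.mul_const (√(2 * π / 3) / π)
  rw [hconst] at hlim
  refine hlim.congr' ?_
  filter_upwards [eventually_ge_atTop 1] with n hn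
  rw [sigma, show √(2 * π * n / 3) = √n * √(2 * π / 3) by
      rw [← sqrt_mul n.cast_nonneg]; ring_nf,
    show (2 : ℝ) ^ n = 2 ^ (n - 1) * 2 by rw [← pow_succ, Nat.sub_add_cancel hn]]
  field_simp
end

section
/- Let Q = [0,1]ⁿ ⊂ ℝⁿ, v = (1,…,1), and let x ∈ ℝⁿ have all coordinates positive and not be proportional to v. Then the intersection of Q with the 2-dimensional subspace L spanned by v and x is a parallelogram with vertices 0, u, v, v − u for some u ∈ L on the boundary of Q lying in a coordinate hyperplane. -/
/-!
Rescale `x` affinely to `u = (x - min x) / (max x - min x)`: then `span {v, x} = span {v, u}`,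
`0 ≤ u ≤ 1`, `u` vanishes at an argmin `i₀` and equals `1` at an argmax `i₁`. A point
`s • v + t • u` of the plane lies in the cube only if its coordinates at `i₀` and `i₁`, namely `s`
and `s + t`, lie in `[0, 1]`, and then `s • v + t • u = (s + t) • u + s • (v - u)` lies in the
Minkowski sum of the segments `[0, u]` and `[0, v - u]`, which is the parallelogram. The reverse
inclusion is convexity, since the four vertices lie in the cube.
-/

open Set Submodule Pointwise

section Parallelogram

variable {𝕜 E : Type*} [Field 𝕜] [LinearOrder 𝕜] [IsStrictOrderedRing 𝕜]
  [AddCommGroup E] [Module 𝕜 E]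

theorem convexHull_parallelogram (a b : E) :
    convexHull 𝕜 {0, a, a + b, b} = segment 𝕜 0 a + segment 𝕜 0 b := by
  rw [← convexHull_pair, ← convexHull_pair, ← convexHull_add]
  congr 1
  simp only [insert_eq, union_add, add_union, singleton_add_singleton, add_zero, zero_add]
  ext
  simp only [mem_union, mem_singleton_iff]
  tauto

theorem smul_add_smul_mem_convexHull_parallelogram {a b : E} {s t : 𝕜}
    (hs : s ∈ Icc 0 1) (ht : t ∈ Icc 0 1) :
    s • a + t • b ∈ convexHull 𝕜 {0, a, a + b, b} := by
  rw [convexHull_parallelogram, segment_eq_image', segment_eq_image']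
  exact add_mem_add ⟨s, hs, by simp⟩ ⟨t, ht, by simp⟩

end Parallelogram

section UnitCube

variable {𝕜 ι : Type*} [Field 𝕜] [LinearOrder 𝕜] [IsStrictOrderedRing 𝕜]

theorem linearIndependent_pair_one {u : ι → 𝕜} {i₀ i₁ : ι} (h₀ : u i₀ = 0) (h₁ : u i₁ ≠ 0) :
    LinearIndependent 𝕜 ![u, 1] := by
  refine LinearIndependent.pair_iff.2 fun s t hst => ?_
  have ht : t = 0 := by simpa [h₀] using congr_fun hst i₀
  subst ht
  simpa [h₁] using congr_fun hst i₁

theorem exists_span_pair_one_eq_of_forall_ne_smul_one [Finite ι] {x : ι → 𝕜}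
    (hx : ∀ c : 𝕜, x ≠ c • 1) :
    ∃ u : ι → 𝕜, span 𝕜 {1, x} = span 𝕜 {1, u} ∧ u ∈ Icc 0 1 ∧
      (∃ i, u i = 0) ∧ ∃ i, u i = 1 := by
  have : Nonempty ι := by
    by_contra h
    exact hx 0 (funext fun i => (h ⟨i⟩).elim)
  obtain ⟨i₀, hmin⟩ := Finite.exists_min x
  obtain ⟨i₁, hmax⟩ := Finite.exists_max x
  have hd : 0 < x i₁ - x i₀ := by
    by_contra! h
    refine hx (x i₀) (funext fun j => ?_)
    simp only [Pi.smul_apply, Pi.one_apply, smul_eq_mul, mul_one]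
    linarith [hmin j, hmax j]
  set u : ι → 𝕜 := (x i₁ - x i₀)⁻¹ • (x - x i₀ • 1) with hu
  have hxu : x i₀ • 1 + (x i₁ - x i₀) • u = x := by
    rw [hu, smul_smul, mul_inv_cancel₀ hd.ne', one_smul, add_sub_cancel]
  have hux : -((x i₁ - x i₀)⁻¹ * x i₀) • 1 + (x i₁ - x i₀)⁻¹ • x = u := by
    rw [hu, smul_sub, smul_smul, neg_smul, neg_add_eq_sub]
  refine ⟨u, le_antisymm ?_ ?_, ⟨fun j => ?_, fun j => ?_⟩, ⟨i₀, ?_⟩, ⟨i₁, ?_⟩⟩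
  · rw [span_le, insert_subset_iff, singleton_subset_iff]
    exact ⟨subset_span (mem_insert _ _), mem_span_pair.2 ⟨_, _, hxu⟩⟩
  · rw [span_le, insert_subset_iff, singleton_subset_iff]
    exact ⟨subset_span (mem_insert _ _), mem_span_pair.2 ⟨_, _, hux⟩⟩
  · simp only [hu, Pi.smul_apply, Pi.sub_apply, Pi.one_apply, smul_eq_mul, mul_one, Pi.zero_apply]
    exact mul_nonneg (inv_nonneg.2 hd.le) (sub_nonneg.2 (hmin j))
  · simp only [hu, Pi.smul_apply, Pi.sub_apply, Pi.one_apply, smul_eq_mul, mul_one]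
    rw [inv_mul_le_one₀ hd]
    linarith [hmax j]
  · simp [hu]
  · simp [hu, hd.ne']

theorem span_pair_one_inter_Icc_eq_convexHull {u : ι → 𝕜} {i₀ i₁ : ι} (hu : u ∈ Icc 0 1)
    (h₀ : u i₀ = 0) (h₁ : u i₁ = 1) :
    (span 𝕜 {1, u} : Set (ι → 𝕜)) ∩ Icc 0 1 = convexHull 𝕜 {0, u, 1, 1 - u} := by
  have hvert : ({0, u, 1, 1 - u} : Set (ι → 𝕜)) ⊆ span 𝕜 {1, u} ∩ Icc 0 1 := by
    have h1 : (1 : ι → 𝕜) ∈ span 𝕜 {1, u} := subset_span (mem_insert _ _)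
    have hu' : u ∈ span 𝕜 {1, u} := subset_span (mem_insert_of_mem _ rfl)
    rintro y (rfl | rfl | rfl | rfl)
    · exact ⟨zero_mem _, le_rfl, zero_le_one⟩
    · exact ⟨hu', hu⟩
    · exact ⟨h1, zero_le_one, le_rfl⟩
    · exact ⟨sub_mem h1 hu', sub_nonneg.2 hu.2, sub_le_self 1 hu.1⟩
  refine subset_antisymm ?_ (convexHull_min hvert ((span 𝕜 _).convex.inter (convex_Icc 0 1)))
  rintro y ⟨hy, hy01⟩
  obtain ⟨c, d, rfl⟩ := mem_span_pair.1 hy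
  have hi₀ : c ∈ Icc 0 1 := by simpa [h₀] using And.intro (hy01.1 i₀) (hy01.2 i₀)
  have hi₁ : c + d ∈ Icc 0 1 := by simpa [h₁] using And.intro (hy01.1 i₁) (hy01.2 i₁)
  have h := smul_add_smul_mem_convexHull_parallelogram (a := u) (b := 1 - u) hi₁ hi₀
  rw [add_sub_cancel] at h
  convert h using 1
  module

end UnitCube

theorem cube_plane_section_parallelogram_general (n : ℕ) (x : Fin n → ℝ)
    (hnp : ∀ c : ℝ, x ≠ c • (fun _ => (1 : ℝ))) :
    ∃ u : Fin n → ℝ,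
      u ∈ Submodule.span ℝ {(fun _ => (1 : ℝ) : Fin n → ℝ), x} ∧
      (∀ i, 0 ≤ u i ∧ u i ≤ 1) ∧ (∃ i, u i = 0) ∧
      LinearIndependent ℝ ![u, (fun _ => (1 : ℝ) : Fin n → ℝ)] ∧
      (Submodule.span ℝ {(fun _ => (1 : ℝ) : Fin n → ℝ), x} : Set (Fin n → ℝ)) ∩
          {y | ∀ i, 0 ≤ y i ∧ y i ≤ 1} =
        convexHull ℝ {0, u, (fun _ => (1 : ℝ)),
          (fun _ => (1 : ℝ)) - u} := by
  obtain ⟨u, hspan, hu, ⟨i₀, h₀⟩, ⟨i₁, h₁⟩⟩ := exists_span_pair_one_eq_of_forall_ne_smul_one hnp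
  have hcube : {y : Fin n → ℝ | ∀ i, 0 ≤ y i ∧ y i ≤ 1} = Icc 0 1 := by
    ext y
    simp [Pi.le_def, forall_and]
  simp only [← Pi.one_def, hspan, hcube]
  exact ⟨u, subset_span (mem_insert_of_mem _ rfl), fun i => ⟨hu.1 i, hu.2 i⟩, ⟨i₀, h₀⟩,
    linearIndependent_pair_one h₀ (h₁ ▸ one_ne_zero), span_pair_one_inter_Icc_eq_convexHull hu h₀ h₁⟩

theorem cube_plane_section_parallelogram (n : ℕ) (hn : 2 ≤ n) (x : Fin n → ℝ)
    (hx : ∀ i, 0 < x i) (hnp : ∀ c : ℝ, x ≠ c • (fun _ => (1 : ℝ))) :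
    ∃ u : Fin n → ℝ,
      u ∈ Submodule.span ℝ {(fun _ => (1 : ℝ) : Fin n → ℝ), x} ∧
      (∀ i, 0 ≤ u i ∧ u i ≤ 1) ∧ (∃ i, u i = 0) ∧
      LinearIndependent ℝ ![u, (fun _ => (1 : ℝ) : Fin n → ℝ)] ∧
      (Submodule.span ℝ {(fun _ => (1 : ℝ) : Fin n → ℝ), x} : Set (Fin n → ℝ)) ∩
          {y | ∀ i, 0 ≤ y i ∧ y i ≤ 1} =
        convexHull ℝ {0, u, (fun _ => (1 : ℝ)),
          (fun _ => (1 : ℝ)) - u} :=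
  cube_plane_section_parallelogram_general n x hnp
end
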